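/- arXiv:1904.03519 — 8 statements merged into one kernel-verified Lean document; each statement's English description precedes it below -/
import Mathlib

section
/- The sequence (t_k)_{k≥0} is strictly decreasing, and 0 < t_k < τ for every k ≥ 1. -/
open Filter Finset

/-- `φ(t) = ∑_{j≥0} a_j t^j`. -/
noncomputable def phiFun (a : ℕ → ℝ) (t : ℝ) : ℝ := ∑' j : ℕ, a j * t ^ j

/-- `φ'(t) = ∑_{j≥0} j·a_j·t^{j-1}`. -/
noncomputable def phiDeriv (a : ℕ → ℝ) (t : ℝ) : ℝ := ∑' j : ℕ, (j : ℝ) * a j * t ^ (j - 1)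

/-! The sequence is the orbit of `τ` under `g x = ρ (φ x - a₀)`. Since the coefficients are
nonnegative and some `a_j` with `j ≥ 1` is positive, `g` is strictly increasing on `[0, τ]`,
with `g 0 = 0` and `g τ = τ - ρ a₀ < τ`; monotonicity then propagates `t₁ < t₀` to every
step and keeps the orbit above `g 0 = 0`. -/

theorem strictAnti_and_pos_of_iterate {g : ℝ → ℝ} {τ : ℝ} (hτ : 0 < τ)
    (hg : StrictMonoOn g (Set.Icc 0 τ)) (hg0 : g 0 = 0) (hgτ : g τ < τ)
    {t : ℕ → ℝ} (ht0 : t 0 = τ) (ht : ∀ k, t (k + 1) = g (t k)) :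
    StrictAnti t ∧ ∀ k, 0 < t k := by
  have mem : ∀ {x}, 0 ≤ x → x ≤ τ → x ∈ Set.Icc 0 τ := fun h₀ h₁ => ⟨h₀, h₁⟩
  have step : ∀ k, 0 < t (k + 1) ∧ t (k + 1) < t k ∧ t k ≤ τ := by
    intro k
    induction k with
    | zero =>
      rw [ht, ht0]
      refine ⟨?_, hgτ, le_rfl⟩
      simpa [hg0] using hg (mem le_rfl hτ.le) (mem hτ.le le_rfl) hτ
    | succ k ih =>
      obtain ⟨hpos, hlt, hle⟩ := ih
      have hk1 : t (k + 1) ∈ Set.Icc 0 τ := mem hpos.le (hlt.le.trans hle)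
      refine ⟨?_, ?_, hk1.2⟩
      · simpa [ht (k + 1), hg0] using hg (mem le_rfl hτ.le) hk1 hpos
      · calc t (k + 1 + 1) = g (t (k + 1)) := ht _
          _ < g (t k) := hg hk1 (mem (hpos.trans hlt).le hle) hlt
          _ = t (k + 1) := (ht k).symm
  refine ⟨strictAnti_nat_of_succ_lt fun k => (step k).2.1, fun k => ?_⟩
  cases k with
  | zero => exact ht0 ▸ hτ
  | succ k => exact (step k).1

theorem phiFun_zero (a : ℕ → ℝ) : phiFun a 0 = a 0 := by
  rw [phiFun, tsum_eq_single 0 fun j hj => by simp [hj]]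
  simp

theorem phiFun_strictMonoOn {a : ℕ → ℝ} (ha : ∀ j, 0 ≤ a j) {j : ℕ} (hj : j ≠ 0)
    (haj : 0 < a j) {s : ℝ} (hs : Summable fun j : ℕ => a j * s ^ j) :
    StrictMonoOn (phiFun a) (Set.Icc 0 s) := by
  intro x ⟨hx, _⟩ y ⟨hy, hys⟩ hxy
  have hsy : Summable fun j : ℕ => a j * y ^ j :=
    hs.of_nonneg_of_le (fun i => mul_nonneg (ha i) (pow_nonneg hy i))
      fun i => mul_le_mul_of_nonneg_left (pow_le_pow_left₀ hy hys i) (ha i)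
  refine hsy.tsum_lt_tsum_of_nonneg (i := j) (fun i => mul_nonneg (ha i) (pow_nonneg hx i))
    (fun i => mul_le_mul_of_nonneg_left (pow_le_pow_left₀ hx hxy.le i) (ha i)) ?_
  exact mul_lt_mul_of_pos_left (pow_lt_pow_left₀ hxy hx hj) haj

theorem stmt_0_general (a : ℕ → ℝ) (ha : ∀ j, 0 ≤ a j) (ha0 : 0 < a 0)
    (ha2 : ∃ j, 2 ≤ j ∧ 0 < a j) (R : ℝ)
    (hconv : ∀ s : ℝ, |s| < R → Summable fun j : ℕ => a j * s ^ j)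
    (τ : ℝ) (hτ : τ ∈ Set.Ioo 0 R)
    (ρ : ℝ) (hρ : ρ = τ / phiFun a τ)
    (t : ℕ → ℝ) (ht0 : t 0 = τ)
    (htrec : ∀ k : ℕ, t (k + 1) = ρ * (phiFun a (t k) - a 0)) :
    StrictAnti t ∧ ∀ k : ℕ, 1 ≤ k → 0 < t k ∧ t k < τ := by
  obtain ⟨hτ0, hτR⟩ := hτ
  obtain ⟨j, hj2, haj⟩ := ha2
  have hφ : StrictMonoOn (phiFun a) (Set.Icc 0 τ) :=
    phiFun_strictMonoOn ha (by omega) haj (hconv τ (by rwa [abs_of_pos hτ0]))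
  have hφτ : a 0 < phiFun a τ := by
    simpa [phiFun_zero] using hφ ⟨le_rfl, hτ0.le⟩ ⟨hτ0.le, le_rfl⟩ hτ0
  have hρ0 : 0 < ρ := hρ ▸ div_pos hτ0 (ha0.trans hφτ)
  have hρφ : ρ * phiFun a τ = τ := hρ ▸ div_mul_cancel₀ τ (ha0.trans hφτ).ne'
  obtain ⟨hanti, hpos⟩ := strictAnti_and_pos_of_iterate (g := fun x => ρ * (phiFun a x - a 0))
    hτ0 (fun x hx y hy hxy => by simpa [hρ0] using hφ hx hy hxy) (by simp [phiFun_zero])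
    (by nlinarith) ht0 htrec
  exact ⟨hanti, fun k hk => ⟨hpos k, ht0 ▸ hanti (by omega : 0 < k)⟩⟩

/-- The sequence `(t_k)_{k≥0}` is strictly decreasing,
and `0 < t_k < τ` for every `k ≥ 1`. -/
theorem stmt_0 (a : ℕ → ℝ) (ha : ∀ j, 0 ≤ a j) (ha0 : 0 < a 0)
    (ha2 : ∃ j, 2 ≤ j ∧ 0 < a j) (R : ℝ) (hR : 0 < R)
    (hconv : ∀ s : ℝ, |s| < R → Summable fun j : ℕ => a j * s ^ j)
    (hdiv : ∀ s : ℝ, R < |s| → ¬ Summable fun j : ℕ => a j * s ^ j)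
    (τ : ℝ) (hτ : τ ∈ Set.Ioo 0 R)
    (hcrit : τ * phiDeriv a τ = phiFun a τ)
    (ρ : ℝ) (hρ : ρ = τ / phiFun a τ)
    (t : ℕ → ℝ) (ht0 : t 0 = τ)
    (htrec : ∀ k : ℕ, t (k + 1) = ρ * (phiFun a (t k) - a 0)) :
    StrictAnti t ∧ ∀ k : ℕ, 1 ≤ k → 0 < t k ∧ t k < τ :=
  stmt_0_general a ha ha0 ha2 R hconv τ hτ ρ hρ t ht0 htrec
end

section
/- One has ρ·φ'(t_1) < 1; moreover, for every k ≥ 1, ρ^{k−1}·∏_{i=1}^{k−1} φ'(t_i) ≤ (ρ·φ'(t_1))^{k−1}, and consequently the series ∑_{k≥1} ρ^{k−1}·∏_{i=1}^{k−1} φ'(t_i) converges. -/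
open Filter Finset

/-- `ρ·φ'(t_1) < 1`; for every `k ≥ 1`,
`ρ^{k−1}·∏_{i=1}^{k−1} φ'(t_i) ≤ (ρ·φ'(t_1))^{k−1}`, and consequently the series
`∑_{k≥1} ρ^{k−1}·∏_{i=1}^{k−1} φ'(t_i)` converges (here reindexed by `k ↦ k+1`). -/
theorem stmt_1 (a : ℕ → ℝ) (ha : ∀ j, 0 ≤ a j) (ha0 : 0 < a 0)
    (ha2 : ∃ j, 2 ≤ j ∧ 0 < a j) (R : ℝ) (hR : 0 < R)
    (hconv : ∀ s : ℝ, |s| < R → Summable fun j : ℕ => a j * s ^ j)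
    (hdiv : ∀ s : ℝ, R < |s| → ¬ Summable fun j : ℕ => a j * s ^ j)
    (τ : ℝ) (hτ : τ ∈ Set.Ioo 0 R)
    (hcrit : τ * phiDeriv a τ = phiFun a τ)
    (ρ : ℝ) (hρ : ρ = τ / phiFun a τ)
    (t : ℕ → ℝ) (ht0 : t 0 = τ)
    (htrec : ∀ k : ℕ, t (k + 1) = ρ * (phiFun a (t k) - a 0)) :
    ρ * phiDeriv a (t 1) < 1 ∧
    (∀ k : ℕ, 1 ≤ k →
      ρ ^ (k - 1) * ∏ i ∈ Finset.Icc 1 (k - 1), phiDeriv a (t i)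
        ≤ (ρ * phiDeriv a (t 1)) ^ (k - 1)) ∧
    Summable (fun k : ℕ => ρ ^ k * ∏ i ∈ Finset.Icc 1 k, phiDeriv a (t i)) := by
  obtain ⟨j0, hj0, haj0⟩ := ha2
  obtain ⟨hτ0, hτR⟩ := hτ
  -- summability of φ on [0, τ]
  have hs_sum : ∀ s : ℝ, 0 ≤ s → s ≤ τ → Summable fun j : ℕ => a j * s ^ j := by
    intro s h0 h1; exact hconv s (by rw [abs_of_nonneg h0]; linarith)
  -- φ(s) ≥ a 0 on [0, τ]
  have hphi_ge : ∀ s : ℝ, 0 ≤ s → s ≤ τ → a 0 ≤ phiFun a s := by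
    intro s h0 h1
    have := Summable.le_tsum (hs_sum s h0 h1) 0
      (fun j _ => mul_nonneg (ha j) (pow_nonneg h0 j))
    simpa [phiFun] using this
  have hphiτpos : 0 < phiFun a τ := lt_of_lt_of_le ha0 (hphi_ge τ hτ0.le le_rfl)
  have hρpos : 0 < ρ := by rw [hρ]; positivity
  -- φ is monotone on [0, τ]
  have hphi_mono : ∀ s u : ℝ, 0 ≤ s → s ≤ u → u ≤ τ → phiFun a s ≤ phiFun a u := by
    intro s u h0 hsu huτ
    exact Summable.tsum_le_tsum
      (fun j => mul_le_mul_of_nonneg_left (pow_le_pow_left₀ h0 hsu j) (ha j))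
      (hs_sum s h0 (hsu.trans huτ)) (hs_sum u (h0.trans hsu) huτ)
  -- summability of φ' on [0, τ]
  set r : ℝ := (τ + R) / 2 with hr
  have hτr : τ < r := by rw [hr]; linarith
  have hrR : r < R := by rw [hr]; linarith
  have hr0 : 0 < r := lt_trans hτ0 hτr
  have hsumr : Summable fun j : ℕ => a j * r ^ j :=
    hconv r (by rw [abs_of_pos hr0]; exact hrR)
  set C : ℝ := ∑' j : ℕ, a j * r ^ j with hC
  have hCj : ∀ j, a j * r ^ j ≤ C := fun j =>
    Summable.le_tsum hsumr j (fun i _ => mul_nonneg (ha i) (pow_nonneg hr0.le i))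
  have hx0 : (0:ℝ) ≤ τ / r := by positivity
  have hx1 : τ / r < 1 := (div_lt_one hr0).2 hτr
  have hgeo : Summable fun j : ℕ => (j : ℝ) * (τ / r) ^ (j - 1) := by
    rw [← summable_nat_add_iff 1]
    have h1 : Summable fun j : ℕ => (j : ℝ) ^ 1 * (τ / r) ^ j :=
      summable_pow_mul_geometric_of_norm_lt_one 1
        (by rw [Real.norm_eq_abs, abs_of_nonneg hx0]; exact hx1)
    have h2 : Summable fun j : ℕ => (τ / r) ^ j := summable_geometric_of_lt_one hx0 hx1
    apply (h1.add h2).congr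
    intro j
    simp only [Nat.add_sub_cancel]
    push_cast
    ring
  have hderiv_sum : ∀ u : ℝ, 0 ≤ u → u ≤ τ →
      Summable fun j : ℕ => (j : ℝ) * a j * u ^ (j - 1) := by
    intro u h0 h1
    apply Summable.of_nonneg_of_le (f := fun j : ℕ => (C / r) * ((j : ℝ) * (τ / r) ^ (j - 1)))
      (fun j => mul_nonneg (mul_nonneg (Nat.cast_nonneg j) (ha j)) (pow_nonneg h0 _))
      _ (hgeo.mul_left (C / r))
    intro j
    cases j with
    | zero => simp
    | succ n =>
      have haj : a (n + 1) ≤ C / r ^ (n + 1) := by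
        rw [le_div_iff₀ (pow_pos hr0 _)]; exact hCj (n + 1)
      simp only [Nat.add_sub_cancel]
      calc ((n + 1 : ℕ) : ℝ) * a (n + 1) * u ^ n
          ≤ ((n + 1 : ℕ) : ℝ) * (C / r ^ (n + 1)) * τ ^ n := by
            have hC0 : 0 ≤ C := le_trans (mul_nonneg (ha 0) (pow_nonneg hr0.le 0)) (hCj 0)
            apply mul_le_mul
            · exact mul_le_mul_of_nonneg_left haj (Nat.cast_nonneg _)
            · exact pow_le_pow_left₀ h0 h1 n
            · exact pow_nonneg h0 n
            · exact mul_nonneg (Nat.cast_nonneg _) (div_nonneg hC0 (pow_nonneg hr0.le _))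
        _ = C / r * (((n + 1 : ℕ) : ℝ) * (τ / r) ^ n) := by
            rw [pow_succ]
            field_simp
            rw [mul_assoc, ← mul_pow, mul_div_assoc', mul_div_cancel_left₀ τ hr0.ne']
  -- φ' nonneg and monotone on [0, τ]
  have hd_nonneg : ∀ u : ℝ, 0 ≤ u → 0 ≤ phiDeriv a u := by
    intro u h0
    exact tsum_nonneg (fun j =>
      mul_nonneg (mul_nonneg (Nat.cast_nonneg j) (ha j)) (pow_nonneg h0 _))
  have hd_mono : ∀ s u : ℝ, 0 ≤ s → s ≤ u → u ≤ τ → phiDeriv a s ≤ phiDeriv a u := by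
    intro s u h0 hsu huτ
    refine Summable.tsum_le_tsum (fun j => ?_) (hderiv_sum s h0 (hsu.trans huτ)) (hderiv_sum u (h0.trans hsu) huτ)
    exact mul_le_mul_of_nonneg_left (pow_le_pow_left₀ h0 hsu _)
      (mul_nonneg (Nat.cast_nonneg j) (ha j))
  have hd_strict : ∀ s u : ℝ, 0 ≤ s → s < u → u ≤ τ → phiDeriv a s < phiDeriv a u := by
    intro s u h0 hsu huτ
    refine Summable.tsum_lt_tsum (i := j0) (fun j => ?_) ?_
      (hderiv_sum s h0 (hsu.le.trans huτ)) (hderiv_sum u (h0.trans hsu.le) huτ)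
    · exact mul_le_mul_of_nonneg_left (pow_le_pow_left₀ h0 hsu.le _)
        (mul_nonneg (Nat.cast_nonneg j) (ha j))
    · have hpow : s ^ (j0 - 1) < u ^ (j0 - 1) :=
        pow_lt_pow_left₀ hsu h0 (by omega)
      have hpos : (0 : ℝ) < (j0 : ℝ) * a j0 := by
        have : (0:ℝ) < (j0 : ℝ) := by exact_mod_cast (by omega : 0 < j0)
        positivity
      exact mul_lt_mul_of_pos_left hpow hpos
  -- ρ·φ'(τ) = 1  and  ρ·φ(τ) = τ
  have hρφ : ρ * phiFun a τ = τ := by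
    rw [hρ]; field_simp
  have hρd : ρ * phiDeriv a τ = 1 := by
    rw [hρ]
    rw [div_mul_eq_mul_div, hcrit, div_self hphiτpos.ne']
  -- basic facts about t 1
  have ht1 : t 1 = ρ * (phiFun a τ - a 0) := by rw [htrec 0, ht0]
  have ht1nn : 0 ≤ t 1 := by
    rw [ht1]
    have := hphi_ge τ hτ0.le le_rfl
    have := hρpos.le
    nlinarith
  have ht1lt : t 1 < τ := by
    rw [ht1, mul_sub, hρφ]
    nlinarith
  -- invariant: 0 ≤ t k, t k ≤ τ, t (k+1) ≤ t k
  have hinv : ∀ k : ℕ, 0 ≤ t k ∧ t k ≤ τ ∧ t (k + 1) ≤ t k := by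
    intro k
    induction k with
    | zero => exact ⟨by rw [ht0]; exact hτ0.le, by rw [ht0], by rw [ht0]; exact ht1lt.le⟩
    | succ n ih =>
      obtain ⟨h0n, hnτ, hdn⟩ := ih
      have h0n1 : 0 ≤ t (n + 1) := by
        rw [htrec n]
        have := hphi_ge (t n) h0n hnτ
        nlinarith
      have hn1τ : t (n + 1) ≤ τ := hdn.trans hnτ
      refine ⟨h0n1, hn1τ, ?_⟩
      calc t (n + 1 + 1) = ρ * (phiFun a (t (n + 1)) - a 0) := htrec (n + 1)
        _ ≤ ρ * (phiFun a (t n) - a 0) := by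
            have := hphi_mono (t (n + 1)) (t n) h0n1 hdn hnτ
            nlinarith
        _ = t (n + 1) := (htrec n).symm
  have hanti : ∀ i j : ℕ, i ≤ j → t j ≤ t i := by
    intro i j hij
    exact antitone_nat_of_succ_le (fun n => (hinv n).2.2) hij
  have hti_le : ∀ i : ℕ, 1 ≤ i → t i ≤ t 1 := fun i hi => hanti 1 i hi
  have ht1τ : t 1 ≤ τ := ht1lt.le
  -- first claim : ρ * φ'(t 1) < 1
  have hmain : ρ * phiDeriv a (t 1) < 1 := by
    have h := hd_strict (t 1) τ ht1nn ht1lt le_rfl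
    calc ρ * phiDeriv a (t 1) < ρ * phiDeriv a τ := mul_lt_mul_of_pos_left h hρpos
      _ = 1 := hρd
  -- general product bound
  have hq0 : 0 ≤ ρ * phiDeriv a (t 1) := mul_nonneg hρpos.le (hd_nonneg _ ht1nn)
  have hprod : ∀ n : ℕ, ρ ^ n * ∏ i ∈ Finset.Icc 1 n, phiDeriv a (t i)
      ≤ (ρ * phiDeriv a (t 1)) ^ n := by
    intro n
    rw [mul_pow]
    apply mul_le_mul_of_nonneg_left _ (pow_nonneg hρpos.le n)
    have : ∏ i ∈ Finset.Icc 1 n, phiDeriv a (t i)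
        ≤ ∏ _i ∈ Finset.Icc 1 n, phiDeriv a (t 1) := by
      apply Finset.prod_le_prod
      · intro i _; exact hd_nonneg _ (hinv i).1
      · intro i hi
        rw [Finset.mem_Icc] at hi
        exact hd_mono (t i) (t 1) (hinv i).1 (hti_le i hi.1) ht1τ
    calc ∏ i ∈ Finset.Icc 1 n, phiDeriv a (t i)
        ≤ ∏ _i ∈ Finset.Icc 1 n, phiDeriv a (t 1) := this
      _ = (phiDeriv a (t 1)) ^ n := by
          rw [Finset.prod_const, Nat.card_Icc, Nat.add_sub_cancel]
  refine ⟨hmain, ?_, ?_⟩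
  · intro k _
    exact hprod (k - 1)
  apply Summable.of_nonneg_of_le
    (f := fun k : ℕ => (ρ * phiDeriv a (t 1)) ^ k)
    (fun k => mul_nonneg (pow_nonneg hρpos.le k)
      (Finset.prod_nonneg (fun i _ => hd_nonneg _ (hinv i).1)))
    (fun k => hprod k)
    (summable_geometric_of_lt_one hq0 hmain)
end

section
/- The sequence (t_k) decreases at an exponential rate: for every k ≥ 1, t_k ≤ t_1·(ρ·φ'(t_1))^{k−1}, where ρ·φ'(t_1) < 1. -/
open Filter Finset

/-- the sequence `(t_k)` decreases at an exponential rate: for every `k ≥ 1`,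
`t_k ≤ t_1·(ρ·φ'(t_1))^{k−1}`, where `ρ·φ'(t_1) < 1`. -/
theorem stmt_2 (a : ℕ → ℝ) (ha : ∀ j, 0 ≤ a j) (ha0 : 0 < a 0)
    (ha2 : ∃ j, 2 ≤ j ∧ 0 < a j) (R : ℝ) (hR : 0 < R)
    (hconv : ∀ s : ℝ, |s| < R → Summable fun j : ℕ => a j * s ^ j)
    (hdiv : ∀ s : ℝ, R < |s| → ¬ Summable fun j : ℕ => a j * s ^ j)
    (τ : ℝ) (hτ : τ ∈ Set.Ioo 0 R)
    (hcrit : τ * phiDeriv a τ = phiFun a τ)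
    (ρ : ℝ) (hρ : ρ = τ / phiFun a τ)
    (t : ℕ → ℝ) (ht0 : t 0 = τ)
    (htrec : ∀ k : ℕ, t (k + 1) = ρ * (phiFun a (t k) - a 0)) :
    ρ * phiDeriv a (t 1) < 1 ∧
    ∀ k : ℕ, 1 ≤ k → t k ≤ t 1 * (ρ * phiDeriv a (t 1)) ^ (k - 1) := by
  obtain ⟨hτ0, hτR⟩ := hτ
  obtain ⟨j₀, hj₀2, hj₀pos⟩ := ha2
  set s : ℝ := (τ + R) / 2 with hs_def
  have hτs : τ < s := by rw [hs_def]; linarith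
  have hsR : s < R := by rw [hs_def]; linarith
  have hs0 : 0 < s := lt_trans hτ0 hτs
  have hsum_s : Summable fun j : ℕ => a j * s ^ j :=
    hconv s (by rw [abs_of_pos hs0]; exact hsR)
  set M : ℝ := ∑' j : ℕ, a j * s ^ j with hM_def
  have hterm_le_M : ∀ j, a j * s ^ j ≤ M := fun j =>
    Summable.le_tsum hsum_s j (fun i _ => mul_nonneg (ha i) (pow_pos hs0 i).le)
  -- summability of the series on [0, τ]
  have hsumφ : ∀ x : ℝ, 0 ≤ x → x ≤ τ → Summable fun j : ℕ => a j * x ^ j := fun x hx hxτ =>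
    hconv x (by rw [abs_of_nonneg hx]; linarith)
  have hsumD : ∀ x : ℝ, 0 ≤ x → x ≤ τ →
      Summable fun j : ℕ => (j : ℝ) * a j * x ^ (j - 1) := by
    intro x hx hxτ
    rw [← summable_nat_add_iff (f := fun j : ℕ => (j : ℝ) * a j * x ^ (j - 1)) 1]
    have hr1 : x / s < 1 := (div_lt_one hs0).2 (lt_of_le_of_lt hxτ hτs)
    have hr0 : 0 ≤ x / s := div_nonneg hx hs0.le
    have hgeom : Summable fun n : ℕ => ((n : ℝ) + 1) * (x / s) ^ n := by
      have h1 := summable_pow_mul_geometric_of_norm_lt_one (R := ℝ) 1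
        (r := x / s) (by rwa [Real.norm_eq_abs, abs_of_nonneg hr0])
      have h2 := summable_geometric_of_lt_one hr0 hr1
      have := h1.add h2
      simpa [add_mul, pow_one] using this
    apply Summable.of_nonneg_of_le _ _ (hgeom.mul_left (M / s))
    · intro n
      have h1 := ha (n+1)
      positivity
    · intro n
      have hpow : (0:ℝ) < s ^ (n+1) := pow_pos hs0 _
      have ha' : a (n+1) ≤ M / s ^ (n+1) := (le_div_iff₀ hpow).2 (hterm_le_M (n+1))
      have hxn : (0:ℝ) ≤ x ^ n := pow_nonneg hx n
      have step1 : ((n:ℝ)+1) * a (n+1) * x ^ n ≤ ((n:ℝ)+1) * (M / s ^ (n+1)) * x ^ n := by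
        have h1 : (0:ℝ) ≤ (n:ℝ)+1 := by positivity
        have := mul_le_mul_of_nonneg_left ha' h1
        exact mul_le_mul_of_nonneg_right this hxn
      have step2 : ((n:ℝ)+1) * (M / s ^ (n+1)) * x ^ n
          = M / s * (((n:ℝ)+1) * (x / s) ^ n) := by
        clear_value s
        rw [div_pow]
        field_simp
        ring
      calc ((n+1 : ℕ) : ℝ) * a (n+1) * x ^ (n + 1 - 1)
          = ((n:ℝ)+1) * a (n+1) * x ^ n := by push_cast; ring_nf
        _ ≤ ((n:ℝ)+1) * (M / s ^ (n+1)) * x ^ n := step1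
        _ = M / s * (((n:ℝ)+1) * (x / s) ^ n) := step2
  -- basic facts about phiFun and phiDeriv
  have hφ_ge : ∀ x : ℝ, 0 ≤ x → x ≤ τ → a 0 ≤ phiFun a x := by
    intro x hx hxτ
    have := Summable.le_tsum (hsumφ x hx hxτ) 0
      (fun i _ => mul_nonneg (ha i) (pow_nonneg hx i))
    simpa [phiFun] using this
  have hφ_mono : ∀ x y : ℝ, 0 ≤ x → x ≤ y → y ≤ τ → phiFun a x ≤ phiFun a y := by
    intro x y hx hxy hyτ
    exact Summable.tsum_le_tsum
      (fun j => mul_le_mul_of_nonneg_left (pow_le_pow_left₀ hx hxy j) (ha j))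
      (hsumφ x hx (hxy.trans hyτ)) (hsumφ y (hx.trans hxy) hyτ)
  have hD_nonneg : ∀ x : ℝ, 0 ≤ x → 0 ≤ phiDeriv a x := by
    intro x hx
    refine tsum_nonneg fun j => ?_
    have := ha j
    positivity
  have hD_mono : ∀ x y : ℝ, 0 ≤ x → x ≤ y → y ≤ τ → phiDeriv a x ≤ phiDeriv a y := by
    intro x y hx hxy hyτ
    refine Summable.tsum_le_tsum (fun j => ?_) (hsumD x hx (hxy.trans hyτ)) (hsumD y (hx.trans hxy) hyτ)
    refine mul_le_mul_of_nonneg_left (pow_le_pow_left₀ hx hxy _) ?_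
    have := ha j
    positivity
  have hD_strict : ∀ x y : ℝ, 0 ≤ x → x < y → y ≤ τ → phiDeriv a x < phiDeriv a y := by
    intro x y hx hxy hyτ
    refine Summable.tsum_lt_tsum (i := j₀)
      (fun j => ?_) ?_ (hsumD x hx (hxy.le.trans hyτ)) (hsumD y (hx.trans hxy.le) hyτ)
    · refine mul_le_mul_of_nonneg_left (pow_le_pow_left₀ hx hxy.le _) ?_
      have := ha j
      positivity
    · have h1 : j₀ - 1 ≠ 0 := by omega
      have hpow := pow_lt_pow_left₀ hxy hx h1
      have hj₀pos' : (0:ℝ) < (j₀:ℝ) * a j₀ := by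
        have : (0:ℝ) < (j₀:ℝ) := by exact_mod_cast (by omega : 0 < j₀)
        positivity
      exact mul_lt_mul_of_pos_left hpow hj₀pos'
  -- splitting off the constant term
  have hφ_split : ∀ x : ℝ, 0 ≤ x → x ≤ τ →
      phiFun a x = a 0 + ∑' n : ℕ, a (n+1) * x ^ (n+1) := by
    intro x hx hxτ
    have := Summable.tsum_eq_zero_add (hsumφ x hx hxτ)
    simpa [phiFun] using this
  have hD_split : ∀ x : ℝ, 0 ≤ x → x ≤ τ →
      phiDeriv a x = ∑' n : ℕ, ((n:ℝ)+1) * a (n+1) * x ^ n := by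
    intro x hx hxτ
    have h := Summable.tsum_eq_zero_add (hsumD x hx hxτ)
    have h0 : ((0:ℕ):ℝ) * a 0 * x ^ (0 - 1) = 0 := by norm_num
    rw [h0, zero_add] at h
    rw [phiDeriv, h]
    congr 1
    funext n
    push_cast
    norm_num
  -- the key inequality  φ(x) - a₀ ≤ x φ'(x)
  have hkey : ∀ x : ℝ, 0 ≤ x → x ≤ τ → phiFun a x - a 0 ≤ x * phiDeriv a x := by
    intro x hx hxτ
    have hsum_shift : Summable fun n : ℕ => ((n:ℝ)+1) * a (n+1) * x ^ n := by
      have := (summable_nat_add_iff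
        (f := fun j : ℕ => (j : ℝ) * a j * x ^ (j - 1)) 1).2 (hsumD x hx hxτ)
      refine this.congr fun n => ?_
      push_cast
      norm_num
    have hsum_shiftφ : Summable fun n : ℕ => a (n+1) * x ^ (n+1) :=
      (summable_nat_add_iff (f := fun j : ℕ => a j * x ^ j) 1).2 (hsumφ x hx hxτ)
    rw [hφ_split x hx hxτ, hD_split x hx hxτ]
    have hle : ∑' n : ℕ, a (n+1) * x ^ (n+1)
        ≤ ∑' n : ℕ, x * (((n:ℝ)+1) * a (n+1) * x ^ n) := by
      refine Summable.tsum_le_tsum (fun n => ?_) hsum_shiftφ (hsum_shift.mul_left x)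
      have h1 : a (n+1) * x ^ (n+1) = x * (a (n+1) * x ^ n) := by rw [pow_succ]; ring
      rw [h1]
      refine mul_le_mul_of_nonneg_left ?_ hx
      have : a (n+1) * x ^ n ≤ ((n:ℝ)+1) * (a (n+1) * x ^ n) := by
        have hb : (0:ℝ) ≤ a (n+1) * x ^ n :=
          mul_nonneg (ha (n+1)) (pow_nonneg hx n)
        have hn1 : (1:ℝ) ≤ (n:ℝ) + 1 := le_add_of_nonneg_left (Nat.cast_nonneg n)
        exact le_mul_of_one_le_left hb hn1
      calc a (n+1) * x ^ n ≤ ((n:ℝ)+1) * (a (n+1) * x ^ n) := this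
        _ = ((n:ℝ)+1) * a (n+1) * x ^ n := by ring
    rw [tsum_mul_left] at hle
    linarith
  -- φ(τ) > a₀
  have hφτ_gt : a 0 < phiFun a τ := by
    have hfin : ∑ i ∈ ({0, j₀} : Finset ℕ), a i * τ ^ i ≤ phiFun a τ :=
      Summable.sum_le_tsum _ (fun i _ => mul_nonneg (ha i) (pow_nonneg hτ0.le i)) (hsumφ τ hτ0.le le_rfl)
    have hne : (0:ℕ) ≠ j₀ := by omega
    rw [Finset.sum_pair hne, pow_zero, mul_one] at hfin
    have hpos : 0 < a j₀ * τ ^ j₀ := by positivity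
    linarith
  have hφτ_pos : 0 < phiFun a τ := lt_trans ha0 hφτ_gt
  have hρ_pos : 0 < ρ := by rw [hρ]; exact div_pos hτ0 hφτ_pos
  have hρφτ : ρ * phiFun a τ = τ := by
    rw [hρ]; field_simp
  have hρD : ρ * phiDeriv a τ = 1 := by
    rw [hρ, div_mul_eq_mul_div, hcrit, div_self hφτ_pos.ne']
  have ht1 : t 1 = τ - ρ * a 0 := by
    rw [htrec 0, ht0, mul_sub, hρφτ]
  have ht1_lt : t 1 < τ := by
    rw [ht1]
    have : 0 < ρ * a 0 := mul_pos hρ_pos ha0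
    linarith
  -- bounds 0 ≤ t k ≤ τ
  have hbound : ∀ k, 0 ≤ t k ∧ t k ≤ τ := by
    intro k
    induction k with
    | zero => exact ⟨ht0 ▸ hτ0.le, ht0 ▸ le_rfl⟩
    | succ n ih =>
      obtain ⟨h0, h1⟩ := ih
      refine ⟨?_, ?_⟩
      · rw [htrec n]
        exact mul_nonneg hρ_pos.le (sub_nonneg.2 (hφ_ge _ h0 h1))
      · rw [htrec n]
        have hm := hφ_mono _ _ h0 h1 le_rfl
        nlinarith [hρ_pos, ha 0]
  have ht1_nonneg : 0 ≤ t 1 := (hbound 1).1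
  -- antitone
  have hanti : ∀ k, t (k+1) ≤ t k := by
    intro k
    induction k with
    | zero => rw [ht0]; exact ht1_lt.le
    | succ n ih =>
      have hm := hφ_mono _ _ (hbound (n+1)).1 ih (hbound n).2
      calc t (n+1+1) = ρ * (phiFun a (t (n+1)) - a 0) := htrec (n+1)
        _ ≤ ρ * (phiFun a (t n) - a 0) := by nlinarith [hρ_pos]
        _ = t (n+1) := (htrec n).symm
  have hle1 : ∀ k, t (k+1) ≤ t 1 := by
    intro k
    induction k with
    | zero => exact le_rfl
    | succ n ih => exact (hanti (n+1)).trans ih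
  set q := ρ * phiDeriv a (t 1) with hq_def
  have hq_lt1 : q < 1 := by
    have hs := hD_strict (t 1) τ ht1_nonneg ht1_lt le_rfl
    calc q = ρ * phiDeriv a (t 1) := hq_def
      _ < ρ * phiDeriv a τ := mul_lt_mul_of_pos_left hs hρ_pos
      _ = 1 := hρD
  have hq_nonneg : 0 ≤ q := mul_nonneg hρ_pos.le (hD_nonneg _ ht1_nonneg)
  have hmain : ∀ k, t (k+1) ≤ t 1 * q ^ k := by
    intro k
    induction k with
    | zero => simp
    | succ n ih =>
      have h0 : 0 ≤ t (n+1) := (hbound (n+1)).1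
      have hτb : t (n+1) ≤ τ := (hbound (n+1)).2
      have step1 : phiFun a (t (n+1)) - a 0 ≤ t (n+1) * phiDeriv a (t (n+1)) := hkey _ h0 hτb
      have step2 : phiDeriv a (t (n+1)) ≤ phiDeriv a (t 1) :=
        hD_mono _ _ h0 (hle1 n) ht1_lt.le
      have hqt : t (n+1+1) ≤ q * t (n+1) := by
        rw [htrec (n+1)]
        calc ρ * (phiFun a (t (n+1)) - a 0)
            ≤ ρ * (t (n+1) * phiDeriv a (t (n+1))) :=
              mul_le_mul_of_nonneg_left step1 hρ_pos.le
          _ ≤ ρ * (t (n+1) * phiDeriv a (t 1)) :=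
              mul_le_mul_of_nonneg_left (mul_le_mul_of_nonneg_left step2 h0) hρ_pos.le
          _ = q * t (n+1) := by rw [hq_def]; ring
      calc t (n+1+1) ≤ q * t (n+1) := hqt
        _ ≤ q * (t 1 * q ^ n) := mul_le_mul_of_nonneg_left ih hq_nonneg
        _ = t 1 * q ^ (n+1) := by ring
  refine ⟨hq_lt1, fun k hk => ?_⟩
  obtain ⟨m, rfl⟩ : ∃ m, k = m + 1 := ⟨k - 1, by omega⟩
  simpa using hmain m
end

section
/- For every k ≥ 0, the formal power series T_k has the same radius of convergence as T, namely ρ = τ/φ(τ). -/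
open Filter Finset PowerSeries

/-- Substitution of a formal power series `T` with zero constant term into the power series
`φ(t) = ∑_{j≥0} a_j t^j`:  `[z^n] φ(T) = ∑_{j=0}^n a_j·[z^n](T^j)`. -/
noncomputable def phiSubst (a : ℕ → ℝ) (T : PowerSeries ℝ) : PowerSeries ℝ :=
  PowerSeries.mk fun n => ∑ j ∈ Finset.range (n + 1), a j * (PowerSeries.coeff (R := ℝ) n) (T ^ j)

lemma coeff_mul_nonneg {A B : PowerSeries ℝ} {n : ℕ}
    (hA : ∀ i, i ≤ n → 0 ≤ coeff (R := ℝ) i A) (hB : ∀ i, i ≤ n → 0 ≤ coeff (R := ℝ) i B) :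
    0 ≤ coeff (R := ℝ) n (A * B) := by
  rw [PowerSeries.coeff_mul]
  refine Finset.sum_nonneg fun p hp => ?_
  rw [Finset.HasAntidiagonal.mem_antidiagonal] at hp
  exact mul_nonneg (hA _ (by omega)) (hB _ (by omega))

lemma coeff_pow_nonneg {A : PowerSeries ℝ} {n : ℕ}
    (hA : ∀ i, i ≤ n → 0 ≤ coeff (R := ℝ) i A) (j : ℕ) : ∀ i, i ≤ n → 0 ≤ coeff (R := ℝ) i (A ^ j) := by
  induction j with
  | zero => intro i hi; rw [pow_zero, PowerSeries.coeff_one]; positivity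
  | succ j ih =>
      intro i hi
      rw [pow_succ]
      exact coeff_mul_nonneg (fun l hl => ih l (le_trans hl hi)) (fun l hl => hA l (le_trans hl hi))

lemma T_coeff_nonneg (a : ℕ → ℝ) (ha : ∀ j, 0 ≤ a j) (T : PowerSeries ℝ)
    (hT : T = PowerSeries.X * phiSubst a T) : ∀ n, 0 ≤ coeff (R := ℝ) n T := by
  intro n
  induction n using Nat.strong_induction_on with
  | _ n ih =>
    match n with
    | 0 => rw [hT, coeff_zero_eq_constantCoeff, map_mul, constantCoeff_X, zero_mul]
    | Nat.succ n =>
      rw [hT, PowerSeries.coeff_succ_X_mul, phiSubst, PowerSeries.coeff_mk]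
      refine Finset.sum_nonneg fun j _ => mul_nonneg (ha j) ?_
      exact coeff_pow_nonneg (fun i hi => ih i (by omega)) j n le_rfl

lemma coeff_mul_le_mul {A A' B B' : PowerSeries ℝ}
    (hA0 : ∀ i, 0 ≤ coeff (R := ℝ) i A) (hB0 : ∀ i, 0 ≤ coeff (R := ℝ) i B)
    (hA'0 : ∀ i, 0 ≤ coeff (R := ℝ) i A')
    (hA : ∀ i, coeff (R := ℝ) i A ≤ coeff (R := ℝ) i A') (hB : ∀ i, coeff (R := ℝ) i B ≤ coeff (R := ℝ) i B')
    (n : ℕ) : coeff (R := ℝ) n (A * B) ≤ coeff (R := ℝ) n (A' * B') := by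
  rw [PowerSeries.coeff_mul, PowerSeries.coeff_mul]
  refine Finset.sum_le_sum fun p _ => ?_
  exact mul_le_mul (hA p.1) (hB p.2) (hB0 p.2) (hA'0 p.1)

lemma coeff_pow_le_pow {A A' : PowerSeries ℝ}
    (hA0 : ∀ i, 0 ≤ coeff (R := ℝ) i A) (hA'0 : ∀ i, 0 ≤ coeff (R := ℝ) i A')
    (hA : ∀ i, coeff (R := ℝ) i A ≤ coeff (R := ℝ) i A') (j : ℕ) : ∀ n : ℕ,
    coeff (R := ℝ) n (A ^ j) ≤ coeff (R := ℝ) n (A' ^ j) := by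
  induction j with
  | zero => simp
  | succ j ih =>
      intro n
      rw [pow_succ, pow_succ]
      exact coeff_mul_le_mul (fun i => coeff_pow_nonneg (fun l _ => hA0 l) j i le_rfl)
        hA0 (fun i => coeff_pow_nonneg (fun l _ => hA'0 l) j i le_rfl) ih hA n

lemma coeff_pow_eq_zero {S : PowerSeries ℝ} (hS : PowerSeries.constantCoeff (R := ℝ) S = 0) :
    ∀ j n : ℕ, n < j → coeff (R := ℝ) n (S ^ j) = 0 := by
  intro j
  induction j with
  | zero => intro n hn; omega
  | succ j ih =>
      intro n hn
      rw [pow_succ, PowerSeries.coeff_mul]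
      refine Finset.sum_eq_zero fun p hp => ?_
      rw [Finset.HasAntidiagonal.mem_antidiagonal] at hp
      rcases lt_or_ge p.1 j with h | h
      · rw [ih p.1 h, zero_mul]
      · have : p.2 = 0 := by omega
        rw [this, coeff_zero_eq_constantCoeff, hS, mul_zero]
noncomputable def evp (A : PowerSeries ℝ) (m : ℕ) (x : ℝ) : ℝ :=
  ∑ n ∈ Finset.range m, coeff (R := ℝ) n A * x ^ n

lemma evp_nonneg {A : PowerSeries ℝ} {x : ℝ} (hA : ∀ i, 0 ≤ coeff (R := ℝ) i A) (hx : 0 ≤ x)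
    (m : ℕ) : 0 ≤ evp A m x :=
  Finset.sum_nonneg fun n _ => mul_nonneg (hA n) (pow_nonneg hx n)

lemma evp_mono_m {A : PowerSeries ℝ} {x : ℝ} (hA : ∀ i, 0 ≤ coeff (R := ℝ) i A) (hx : 0 ≤ x)
    {m m' : ℕ} (h : m ≤ m') : evp A m x ≤ evp A m' x :=
  Finset.sum_le_sum_of_subset_of_nonneg (Finset.range_subset_range.2 h)
    (fun n _ _ => mul_nonneg (hA n) (pow_nonneg hx n))

lemma evp_le_evp {A B : PowerSeries ℝ} {x : ℝ} (hx : 0 ≤ x)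
    (h : ∀ i, coeff (R := ℝ) i A ≤ coeff (R := ℝ) i B) (m : ℕ) : evp A m x ≤ evp B m x :=
  Finset.sum_le_sum fun n _ => mul_le_mul_of_nonneg_right (h n) (pow_nonneg hx n)

lemma evp_one {x : ℝ} {m : ℕ} (hm : 1 ≤ m) : evp 1 m x = 1 := by
  unfold evp
  rw [Finset.sum_eq_single 0]
  · simp
  · intro n _ hn
    rw [PowerSeries.coeff_one, if_neg hn, zero_mul]
  · intro h; exact absurd (Finset.mem_range.2 hm) h

lemma antidiag_biUnion (m : ℕ) :
    (Finset.range m).biUnion Finset.HasAntidiagonal.antidiagonal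
      = (Finset.range m ×ˢ Finset.range m).filter (fun p => p.1 + p.2 < m) := by
  ext p
  simp only [Finset.mem_biUnion, Finset.HasAntidiagonal.mem_antidiagonal, Finset.mem_filter,
    Finset.mem_product, Finset.mem_range]
  constructor
  · rintro ⟨i, hi, he⟩; omega
  · intro h; exact ⟨p.1 + p.2, by omega, rfl⟩

lemma evp_mul_expand (A B : PowerSeries ℝ) (m : ℕ) (x : ℝ) :
    evp (A * B) m x = ∑ p ∈ (Finset.range m ×ˢ Finset.range m).filter
        (fun p : ℕ × ℕ => p.1 + p.2 < m),
      coeff (R := ℝ) p.1 A * coeff (R := ℝ) p.2 B * x ^ (p.1 + p.2) := by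
  rw [← antidiag_biUnion, Finset.sum_biUnion]
  · refine Finset.sum_congr rfl fun n _ => ?_
    rw [PowerSeries.coeff_mul, Finset.sum_mul]
    refine Finset.sum_congr rfl fun p hp => ?_
    rw [Finset.HasAntidiagonal.mem_antidiagonal] at hp
    rw [hp]
  · intro i _ j _ hij
    simp only [Finset.disjoint_left, Finset.HasAntidiagonal.mem_antidiagonal]
    intro p h1 h2
    omega

lemma evp_mul_le {A B : PowerSeries ℝ} {x : ℝ}
    (hA : ∀ i, 0 ≤ coeff (R := ℝ) i A) (hB : ∀ i, 0 ≤ coeff (R := ℝ) i B) (hx : 0 ≤ x) (m : ℕ) :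
    evp (A * B) m x ≤ evp A m x * evp B m x := by
  rw [evp_mul_expand, evp, evp, Finset.sum_mul_sum]
  rw [← Finset.sum_product']
  refine Finset.sum_le_sum_of_subset_of_nonneg (Finset.filter_subset _ _) ?_ |>.trans ?_
  · intro p _ _
    exact mul_nonneg (mul_nonneg (hA p.1) (hB p.2)) (pow_nonneg hx _)
  · refine le_of_eq (Finset.sum_congr rfl fun p _ => ?_)
    rw [pow_add]; ring

lemma evp_mul_ge {A B : PowerSeries ℝ} {x : ℝ}
    (hA : ∀ i, 0 ≤ coeff (R := ℝ) i A) (hB : ∀ i, 0 ≤ coeff (R := ℝ) i B) (hx : 0 ≤ x) (m : ℕ) :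
    evp A m x * evp B m x ≤ evp (A * B) (2 * m) x := by
  rw [evp_mul_expand, evp, evp, Finset.sum_mul_sum, ← Finset.sum_product']
  have h1 : ∑ p ∈ Finset.range m ×ˢ Finset.range m,
      coeff (R := ℝ) p.1 A * x ^ p.1 * (coeff (R := ℝ) p.2 B * x ^ p.2)
      = ∑ p ∈ Finset.range m ×ˢ Finset.range m,
      coeff (R := ℝ) p.1 A * coeff (R := ℝ) p.2 B * x ^ (p.1 + p.2) := by
    refine Finset.sum_congr rfl fun p _ => ?_
    rw [pow_add]; ring
  rw [h1]
  refine Finset.sum_le_sum_of_subset_of_nonneg ?_ ?_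
  · intro p hp
    simp only [Finset.mem_product, Finset.mem_range] at hp
    simp only [Finset.mem_filter, Finset.mem_product, Finset.mem_range]
    omega
  · intro p _ _
    exact mul_nonneg (mul_nonneg (hA p.1) (hB p.2)) (pow_nonneg hx _)

lemma evp_pow_le {A : PowerSeries ℝ} {x : ℝ} (hA : ∀ i, 0 ≤ coeff (R := ℝ) i A) (hx : 0 ≤ x)
    {m : ℕ} (hm : 1 ≤ m) (j : ℕ) : evp (A ^ j) m x ≤ (evp A m x) ^ j := by
  induction j with
  | zero => rw [pow_zero, pow_zero, evp_one hm]
  | succ j ih =>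
      rw [pow_succ, pow_succ]
      refine le_trans (evp_mul_le (fun i => coeff_pow_nonneg (fun l _ => hA l) j i le_rfl)
        hA hx m) ?_
      exact mul_le_mul_of_nonneg_right ih (evp_nonneg hA hx m)

lemma evp_pow_ge {A : PowerSeries ℝ} {x : ℝ} (hA : ∀ i, 0 ≤ coeff (R := ℝ) i A) (hx : 0 ≤ x)
    {m : ℕ} (hm : 1 ≤ m) (j : ℕ) : (evp A m x) ^ j ≤ evp (A ^ j) (2 ^ j * m) x := by
  induction j with
  | zero => rw [pow_zero, pow_zero, evp_one (by omega)]
  | succ j ih =>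
      have hAj : ∀ i, 0 ≤ coeff (R := ℝ) i (A ^ j) := fun i => coeff_pow_nonneg (fun l _ => hA l) j i le_rfl
      calc (evp A m x) ^ (j + 1) = (evp A m x) ^ j * evp A m x := by rw [pow_succ]
        _ ≤ evp (A ^ j) (2 ^ j * m) x * evp A (2 ^ j * m) x := by
            refine mul_le_mul ih (evp_mono_m hA hx ?_) (evp_nonneg hA hx m)
              (evp_nonneg hAj hx _)
            calc m = 1 * m := (one_mul m).symm
              _ ≤ 2 ^ j * m := Nat.mul_le_mul_right m (Nat.one_le_two_pow)
        _ ≤ evp (A ^ j * A) (2 * (2 ^ j * m)) x := evp_mul_ge hAj hA hx _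
        _ = evp (A ^ (j + 1)) (2 ^ (j + 1) * m) x := by rw [pow_succ]; ring_nf

lemma keyEq (a : ℕ → ℝ) (T : PowerSeries ℝ) (hTc : PowerSeries.constantCoeff (R := ℝ) T = 0)
    (hT : T = PowerSeries.X * phiSubst a T) (x : ℝ) (m : ℕ) :
    evp T (m + 1) x = x * ∑ j ∈ Finset.range m, a j * evp (T ^ j) m x := by
  have hc : ∀ n : ℕ, coeff (R := ℝ) (n + 1) T = ∑ j ∈ Finset.range (n + 1), a j * coeff (R := ℝ) n (T ^ j) := by
    intro n
    conv_lhs => rw [hT]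
    rw [PowerSeries.coeff_succ_X_mul, phiSubst, PowerSeries.coeff_mk]
  have h1 : evp T (m + 1) x
      = ∑ n ∈ Finset.range m, (∑ j ∈ Finset.range m, a j * coeff (R := ℝ) n (T ^ j)) * x ^ (n + 1) := by
    unfold evp
    rw [Finset.sum_range_succ', coeff_zero_eq_constantCoeff]
    simp only [hc, hTc, zero_mul, add_zero]
    refine Finset.sum_congr rfl fun n hn => ?_
    rw [Finset.mem_range] at hn
    congr 1
    refine Finset.sum_subset ?_ ?_
    · intro j hj
      rw [Finset.mem_range] at hj ⊢
      omega
    · intro j hj hnj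
      rw [Finset.mem_range] at hj
      rw [Finset.mem_range] at hnj
      rw [coeff_pow_eq_zero hTc j n (by omega), mul_zero]
  rw [h1]
  unfold evp
  simp only [Finset.sum_mul, Finset.mul_sum]
  rw [Finset.sum_comm]
  refine Finset.sum_congr rfl fun j _ => Finset.sum_congr rfl fun n _ => by ring
lemma summable_phi_of_le (a : ℕ → ℝ) (ha : ∀ j, 0 ≤ a j) {s t : ℝ} (h0 : 0 ≤ s) (hst : s ≤ t)
    (hsum : Summable fun j : ℕ => a j * t ^ j) : Summable fun j : ℕ => a j * s ^ j := by
  refine Summable.of_nonneg_of_le (fun j => mul_nonneg (ha j) (pow_nonneg h0 j))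
    (fun j => mul_le_mul_of_nonneg_left (pow_le_pow_left₀ h0 hst j) (ha j)) hsum

lemma phi_mono (a : ℕ → ℝ) (ha : ∀ j, 0 ≤ a j) {s t : ℝ} (h0 : 0 ≤ s) (hst : s ≤ t)
    (hsum : Summable fun j : ℕ => a j * t ^ j) : phiFun a s ≤ phiFun a t :=
  Summable.tsum_le_tsum (fun j => mul_le_mul_of_nonneg_left (pow_le_pow_left₀ h0 hst j) (ha j))
    (summable_phi_of_le a ha h0 hst hsum) hsum

lemma phi_ge_a0 (a : ℕ → ℝ) (ha : ∀ j, 0 ≤ a j) {t : ℝ} (h0 : 0 ≤ t)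
    (hsum : Summable fun j : ℕ => a j * t ^ j) : a 0 ≤ phiFun a t := by
  have := Summable.le_tsum hsum 0 (fun j _ => mul_nonneg (ha j) (pow_nonneg h0 j))
  simpa [phiFun] using this

lemma pow_tangent {t τ : ℝ} (ht : 0 ≤ t) (hτ : 0 ≤ τ) (j : ℕ) :
    τ ^ j + (j : ℝ) * τ ^ (j - 1) * (t - τ) ≤ t ^ j := by
  match j with
  | 0 => simp
  | (n + 1) =>
    have hsub : n + 1 - 1 = n := rfl
    rw [hsub]
    have key : t ^ (n + 1) - τ ^ (n + 1)
        = (∑ i ∈ Finset.range (n + 1), t ^ i * τ ^ (n - i)) * (t - τ) := by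
      rw [← geom_sum₂_mul t τ (n + 1)]
      simp only [Nat.add_sub_cancel]
    rcases le_or_gt τ t with h | h
    · have hterm : ∀ i ∈ Finset.range (n + 1), τ ^ n ≤ t ^ i * τ ^ (n - i) := by
        intro i hi
        rw [Finset.mem_range] at hi
        calc τ ^ n = τ ^ i * τ ^ (n - i) := by rw [← pow_add]; congr 1; omega
          _ ≤ t ^ i * τ ^ (n - i) :=
            mul_le_mul_of_nonneg_right (pow_le_pow_left₀ hτ h i) (pow_nonneg hτ _)
      have hsum : ((n : ℝ) + 1) * τ ^ n ≤ ∑ i ∈ Finset.range (n + 1), t ^ i * τ ^ (n - i) := by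
        have := Finset.card_nsmul_le_sum (Finset.range (n + 1)) _ _ hterm
        rw [Finset.card_range, nsmul_eq_mul] at this
        push_cast at this
        linarith
      have := mul_le_mul_of_nonneg_right hsum (by linarith : (0:ℝ) ≤ t - τ)
      push_cast
      nlinarith [key]
    · have hterm : ∀ i ∈ Finset.range (n + 1), t ^ i * τ ^ (n - i) ≤ τ ^ n := by
        intro i hi
        rw [Finset.mem_range] at hi
        calc t ^ i * τ ^ (n - i) ≤ τ ^ i * τ ^ (n - i) :=
              mul_le_mul_of_nonneg_right (pow_le_pow_left₀ ht h.le i) (pow_nonneg hτ _)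
          _ = τ ^ n := by rw [← pow_add]; congr 1; omega
      have hsum : ∑ i ∈ Finset.range (n + 1), t ^ i * τ ^ (n - i) ≤ ((n : ℝ) + 1) * τ ^ n := by
        have := Finset.sum_le_card_nsmul (Finset.range (n + 1)) _ _ hterm
        rw [Finset.card_range, nsmul_eq_mul] at this
        push_cast at this
        linarith
      have := mul_le_mul_of_nonpos_right hsum (by linarith : t - τ ≤ 0)
      push_cast
      nlinarith [key]

lemma deriv_summable (a : ℕ → ℝ) (ha : ∀ j, 0 ≤ a j) {τ R : ℝ} (h0 : 0 < τ) (hτR : τ < R)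
    (hconv : ∀ s : ℝ, |s| < R → Summable fun j : ℕ => a j * s ^ j) :
    Summable fun j : ℕ => (j : ℝ) * a j * τ ^ (j - 1) := by
  obtain ⟨σ, hσ, hτσ, hσR⟩ : ∃ σ : ℝ, 0 < σ ∧ τ < σ ∧ σ < R :=
    ⟨(τ + R) / 2, by linarith, by linarith, by linarith⟩
  have hsumσ : Summable fun j : ℕ => a j * σ ^ j := hconv σ (by rw [abs_of_pos hσ]; exact hσR)
  set M : ℝ := ∑' j : ℕ, a j * σ ^ j with hMdef
  have hM : ∀ j, a j * σ ^ j ≤ M :=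
    fun j => Summable.le_tsum hsumσ j (fun i _ => mul_nonneg (ha i) (pow_nonneg hσ.le i))
  set r : ℝ := τ / σ with hrdef
  have hr0 : 0 < r := div_pos h0 hσ
  have hr1 : r < 1 := (div_lt_one hσ).2 hτσ
  have hgeom : Summable fun j : ℕ => (j : ℝ) * r ^ j := by
    have := summable_pow_mul_geometric_of_norm_lt_one 1 (r := r)
      (by rw [Real.norm_eq_abs, abs_of_pos hr0]; exact hr1)
    refine this.congr fun j => by rw [pow_one]
  refine Summable.of_nonneg_of_le
    (fun j => mul_nonneg (mul_nonneg (Nat.cast_nonneg j) (ha j)) (pow_nonneg h0.le _)) ?_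
    (hgeom.mul_left (M / τ))
  intro j
  match j with
  | 0 => simp
  | (n + 1) =>
    have hsub : n + 1 - 1 = n := rfl
    rw [hsub]
    have h1 : a (n + 1) ≤ M / σ ^ (n + 1) := (le_div_iff₀ (pow_pos hσ _)).2 (hM (n + 1))
    have h2 : ((n : ℝ) + 1) * a (n + 1) * τ ^ n
        ≤ ((n : ℝ) + 1) * (M / σ ^ (n + 1)) * τ ^ n := by
      have hc : (0:ℝ) ≤ (n : ℝ) + 1 := by positivity
      exact mul_le_mul_of_nonneg_right
        (mul_le_mul_of_nonneg_left h1 hc) (pow_nonneg h0.le n)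
    have h3 : ((n : ℝ) + 1) * (M / σ ^ (n + 1)) * τ ^ n
        = M / τ * (((n : ℝ) + 1) * r ^ (n + 1)) := by
      have hτ0 : τ ≠ 0 := ne_of_gt h0
      have hσ0 : σ ≠ 0 := ne_of_gt hσ
      rw [hrdef, div_pow]
      field_simp
      ring
    push_cast
    push_cast at h2
    rw [h3] at h2
    exact h2

lemma phi_tangent_ineq (a : ℕ → ℝ) (ha : ∀ j, 0 ≤ a j) {τ R : ℝ} (h0 : 0 < τ) (hτR : τ < R)
    (hconv : ∀ s : ℝ, |s| < R → Summable fun j : ℕ => a j * s ^ j)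
    (hcrit : τ * phiDeriv a τ = phiFun a τ) {t : ℝ} (ht : 0 ≤ t)
    (hsum : Summable fun j : ℕ => a j * t ^ j) :
    phiFun a τ * t ≤ τ * phiFun a t := by
  have hτabs : |τ| < R := by rw [abs_of_pos h0]; exact hτR
  have hsumτ : Summable fun j : ℕ => a j * τ ^ j := hconv τ hτabs
  have hD : Summable fun j : ℕ => (j : ℝ) * a j * τ ^ (j - 1) :=
    deriv_summable a ha h0 hτR hconv
  have hterm : ∀ j : ℕ, a j * τ ^ j + ((j : ℝ) * a j * τ ^ (j - 1)) * (t - τ) ≤ a j * t ^ j := by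
    intro j
    have := pow_tangent ht h0.le (j := j)
    calc a j * τ ^ j + ((j : ℝ) * a j * τ ^ (j - 1)) * (t - τ)
        = a j * (τ ^ j + (j : ℝ) * τ ^ (j - 1) * (t - τ)) := by ring
      _ ≤ a j * t ^ j := mul_le_mul_of_nonneg_left this (ha j)
  have h1 : phiFun a τ + phiDeriv a τ * (t - τ) ≤ phiFun a t := by
    have hle := Summable.tsum_le_tsum hterm (hsumτ.add (hD.mul_right (t - τ))) hsum
    rw [Summable.tsum_add hsumτ (hD.mul_right (t - τ)), tsum_mul_right] at hle
    exact hle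
  have h2 := mul_le_mul_of_nonneg_left h1 h0.le
  nlinarith [h2, hcrit]

section Main
variable (a : ℕ → ℝ) (T : PowerSeries ℝ)

lemma conv_bound (ha : ∀ j, 0 ≤ a j) (hTc : PowerSeries.constantCoeff (R := ℝ) T = 0)
    (hT : T = PowerSeries.X * phiSubst a T) {τ R : ℝ} (hτ0 : 0 < τ) (hτR : τ < R)
    (hconv : ∀ s : ℝ, |s| < R → Summable fun j : ℕ => a j * s ^ j)
    {ρ : ℝ} (hρ0 : 0 ≤ ρ) (hρτ : ρ * phiFun a τ = τ)
    {x : ℝ} (hx0 : 0 ≤ x) (hxρ : x ≤ ρ) : ∀ m, evp T m x ≤ τ := by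
  have hT0 : ∀ i, 0 ≤ coeff (R := ℝ) i T := T_coeff_nonneg a ha T hT
  have hsumτ : Summable fun j : ℕ => a j * τ ^ j :=
    hconv τ (by rw [abs_of_pos hτ0]; exact hτR)
  intro m
  induction m with
  | zero =>
      simp only [evp, Finset.range_zero, Finset.sum_empty]
      exact hτ0.le
  | succ m ih =>
      have hs0 : 0 ≤ evp T m x := evp_nonneg hT0 hx0 m
      have hsums : Summable fun j : ℕ => a j * (evp T m x) ^ j :=
        summable_phi_of_le a ha hs0 ih hsumτ
      calc evp T (m + 1) x = x * ∑ j ∈ Finset.range m, a j * evp (T ^ j) m x :=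
            keyEq a T hTc hT x m
        _ ≤ x * ∑ j ∈ Finset.range m, a j * (evp T m x) ^ j := by
            refine mul_le_mul_of_nonneg_left (Finset.sum_le_sum fun j hj => ?_) hx0
            rw [Finset.mem_range] at hj
            exact mul_le_mul_of_nonneg_left (evp_pow_le hT0 hx0 (by omega) j) (ha j)
        _ ≤ x * phiFun a (evp T m x) := by
            refine mul_le_mul_of_nonneg_left ?_ hx0
            exact Summable.sum_le_tsum (Finset.range m)
              (fun j _ => mul_nonneg (ha j) (pow_nonneg hs0 j)) hsums
        _ ≤ x * phiFun a τ := mul_le_mul_of_nonneg_left (phi_mono a ha hs0 ih hsumτ) hx0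
        _ ≤ ρ * phiFun a τ := by
            refine mul_le_mul_of_nonneg_right hxρ ?_
            exact le_trans (ha 0) (phi_ge_a0 a ha hτ0.le hsumτ)
        _ = τ := hρτ

lemma conv_summable (ha : ∀ j, 0 ≤ a j) (hTc : PowerSeries.constantCoeff (R := ℝ) T = 0)
    (hT : T = PowerSeries.X * phiSubst a T) {τ R : ℝ} (hτ0 : 0 < τ) (hτR : τ < R)
    (hconv : ∀ s : ℝ, |s| < R → Summable fun j : ℕ => a j * s ^ j)
    {ρ : ℝ} (hρ0 : 0 ≤ ρ) (hρτ : ρ * phiFun a τ = τ)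
    {x : ℝ} (hx0 : 0 ≤ x) (hxρ : x ≤ ρ) :
    Summable fun n : ℕ => coeff (R := ℝ) n T * x ^ n := by
  have hT0 : ∀ i, 0 ≤ coeff (R := ℝ) i T := T_coeff_nonneg a ha T hT
  refine summable_of_sum_range_le (c := τ)
    (fun n => mul_nonneg (hT0 n) (pow_nonneg hx0 n)) (fun m => ?_)
  exact conv_bound a T ha hTc hT hτ0 hτR hconv hρ0 hρτ hx0 hxρ m

lemma div_bound (ha : ∀ j, 0 ≤ a j) (hTc : PowerSeries.constantCoeff (R := ℝ) T = 0)
    (hT : T = PowerSeries.X * phiSubst a T) {τ R : ℝ} (hτ0 : 0 < τ) (hτR : τ < R)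
    (hconv : ∀ s : ℝ, |s| < R → Summable fun j : ℕ => a j * s ^ j)
    (hcrit : τ * phiDeriv a τ = phiFun a τ) (ha0 : 0 < a 0)
    {ρ : ℝ} (hρτ : ρ * phiFun a τ = τ)
    {y : ℝ} (hy0 : 0 < y) (hsum : Summable fun n : ℕ => coeff (R := ℝ) n T * y ^ n) :
    y ≤ ρ := by
  have hT0 : ∀ i, 0 ≤ coeff (R := ℝ) i T := T_coeff_nonneg a ha T hT
  have hTp0 : ∀ j i, 0 ≤ coeff (R := ℝ) i (T ^ j) :=
    fun j i => coeff_pow_nonneg (fun l _ => hT0 l) j i le_rfl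
  have hsumτ : Summable fun j : ℕ => a j * τ ^ j :=
    hconv τ (by rw [abs_of_pos hτ0]; exact hτR)
  have hφτpos : 0 < phiFun a τ := lt_of_lt_of_le ha0 (phi_ge_a0 a ha hτ0.le hsumτ)
  set f : ℝ := ∑' n : ℕ, coeff (R := ℝ) n T * y ^ n with hfdef
  have hterm0 : ∀ n : ℕ, 0 ≤ coeff (R := ℝ) n T * y ^ n :=
    fun n => mul_nonneg (hT0 n) (pow_nonneg hy0.le n)
  have hS : ∀ m, evp T m y ≤ f := fun m => Summable.sum_le_tsum (Finset.range m) (fun n _ => hterm0 n) hsum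
  have hf0 : 0 ≤ f := tsum_nonneg hterm0
  have htend : Tendsto (fun m => evp T m y) atTop (nhds f) :=
    hsum.hasSum.tendsto_sum_nat
  -- claim 1
  have claim1 : ∀ N m : ℕ, 1 ≤ m → y * ∑ j ∈ Finset.range N, a j * (evp T m y) ^ j ≤ f := by
    intro N m hm
    set M : ℕ := max (2 ^ N * m) N with hMdef
    have step1 : ∀ j ∈ Finset.range N, (evp T m y) ^ j ≤ evp (T ^ j) M y := by
      intro j hj
      rw [Finset.mem_range] at hj
      refine le_trans (evp_pow_ge hT0 hy0.le hm j) (evp_mono_m (hTp0 j) hy0.le ?_)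
      calc 2 ^ j * m ≤ 2 ^ N * m := Nat.mul_le_mul_right m (Nat.pow_le_pow_right (by omega) hj.le)
        _ ≤ M := le_max_left _ _
    have step2 : ∑ j ∈ Finset.range N, a j * (evp T m y) ^ j
        ≤ ∑ j ∈ Finset.range M, a j * evp (T ^ j) M y := by
      refine le_trans (Finset.sum_le_sum fun j hj =>
        mul_le_mul_of_nonneg_left (step1 j hj) (ha j)) ?_
      refine Finset.sum_le_sum_of_subset_of_nonneg
        (Finset.range_subset_range.2 (le_max_right _ _)) ?_
      intro j _ _
      exact mul_nonneg (ha j) (evp_nonneg (hTp0 j) hy0.le M)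
    calc y * ∑ j ∈ Finset.range N, a j * (evp T m y) ^ j
        ≤ y * ∑ j ∈ Finset.range M, a j * evp (T ^ j) M y :=
          mul_le_mul_of_nonneg_left step2 hy0.le
      _ = evp T (M + 1) y := (keyEq a T hTc hT y M).symm
      _ ≤ f := hS (M + 1)
  -- claim 2
  have claim2 : ∀ N : ℕ, y * ∑ j ∈ Finset.range N, a j * f ^ j ≤ f := by
    intro N
    have htend2 : Tendsto (fun m => y * ∑ j ∈ Finset.range N, a j * (evp T m y) ^ j)
        atTop (nhds (y * ∑ j ∈ Finset.range N, a j * f ^ j)) := by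
      refine Tendsto.const_mul y (tendsto_finset_sum _ fun j _ => ?_)
      exact Tendsto.const_mul (a j) (htend.pow j)
    refine le_of_tendsto htend2 ?_
    filter_upwards [eventually_ge_atTop 1] with m hm
    exact claim1 N m hm
  have hfsum : Summable fun j : ℕ => a j * f ^ j := by
    refine summable_of_sum_range_le (c := f / y)
      (fun j => mul_nonneg (ha j) (pow_nonneg hf0 j)) (fun N => ?_)
    rw [le_div_iff₀ hy0, mul_comm]
    exact claim2 N
  have hyφ : y * phiFun a f ≤ f := by
    have := Real.tsum_le_of_sum_range_le (f := fun j => a j * f ^ j) (c := f / y)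
      (fun j => mul_nonneg (ha j) (pow_nonneg hf0 j))
      (fun N => by rw [le_div_iff₀ hy0, mul_comm]; exact claim2 N)
    rw [phiFun, mul_comm]
    exact (le_div_iff₀ hy0).1 this
  have hc1 : coeff (R := ℝ) 1 T = a 0 := by
    conv_lhs => rw [hT]
    rw [show (1 : ℕ) = 0 + 1 from rfl, PowerSeries.coeff_succ_X_mul, phiSubst,
      PowerSeries.coeff_mk, Finset.sum_range_one, pow_zero]
    simp
  have hfpos : 0 < f := by
    have h1 : coeff (R := ℝ) 1 T * y ^ 1 ≤ f := Summable.le_tsum hsum 1 (fun n _ => hterm0 n)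
    rw [hc1, pow_one] at h1
    nlinarith
  have htangent : phiFun a τ * f ≤ τ * phiFun a f :=
    phi_tangent_ineq a ha hτ0 hτR hconv hcrit hf0 hfsum
  have h5 : y * phiFun a τ ≤ τ := by
    have hchain : (y * phiFun a τ) * f ≤ τ * f := by
      calc (y * phiFun a τ) * f = y * (phiFun a τ * f) := by ring
        _ ≤ y * (τ * phiFun a f) := mul_le_mul_of_nonneg_left htangent hy0.le
        _ = τ * (y * phiFun a f) := by ring
        _ ≤ τ * f := mul_le_mul_of_nonneg_left hyφ hτ0.le
    exact le_of_mul_le_mul_right hchain hfpos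
  have := hρτ
  nlinarith [h5, hφτpos]

end Main

section TkSec
variable (a : ℕ → ℝ) (T : PowerSeries ℝ) (Tk : ℕ → PowerSeries ℝ)

lemma T_coeff_one (hT : T = PowerSeries.X * phiSubst a T) : coeff (R := ℝ) 1 T = a 0 := by
  conv_lhs => rw [hT]
  rw [show (1 : ℕ) = 0 + 1 from rfl, PowerSeries.coeff_succ_X_mul, phiSubst,
    PowerSeries.coeff_mk, Finset.sum_range_one, pow_zero]
  simp

lemma Tk_const (hTc : PowerSeries.constantCoeff (R := ℝ) T = 0) (hTk0 : Tk 0 = T)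
    (hTkrec : ∀ k : ℕ, Tk (k + 1) =
      PowerSeries.X * (phiSubst a (Tk k) - PowerSeries.C (R := ℝ) (a 0))) :
    ∀ k, PowerSeries.constantCoeff (R := ℝ) (Tk k) = 0 := by
  intro k
  cases k with
  | zero => rw [hTk0]; exact hTc
  | succ k => rw [hTkrec, map_mul, constantCoeff_X, zero_mul]

lemma Tk_bounds (ha : ∀ j, 0 ≤ a j) (hTc : PowerSeries.constantCoeff (R := ℝ) T = 0)
    (hT : T = PowerSeries.X * phiSubst a T) (hTk0 : Tk 0 = T)
    (hTkrec : ∀ k : ℕ, Tk (k + 1) =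
      PowerSeries.X * (phiSubst a (Tk k) - PowerSeries.C (R := ℝ) (a 0))) :
    ∀ k, (∀ n, 0 ≤ coeff (R := ℝ) n (Tk k)) ∧ (∀ n, coeff (R := ℝ) n (Tk k) ≤ coeff (R := ℝ) n T) := by
  have hT0 : ∀ i, 0 ≤ coeff (R := ℝ) i T := T_coeff_nonneg a ha T hT
  intro k
  induction k with
  | zero => exact ⟨fun n => by rw [hTk0]; exact hT0 n, fun n => by rw [hTk0]⟩
  | succ k ih =>
      obtain ⟨ih0, ihle⟩ := ih
      have hrec : ∀ n : ℕ, coeff (R := ℝ) (n + 1) (Tk (k + 1))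
          = (∑ j ∈ Finset.range (n + 1), a j * coeff (R := ℝ) n ((Tk k) ^ j))
            - (if n = 0 then a 0 else 0) := by
        intro n
        rw [hTkrec, PowerSeries.coeff_succ_X_mul, map_sub, PowerSeries.coeff_C, phiSubst,
          PowerSeries.coeff_mk]
      have hzero : coeff (R := ℝ) 0 (Tk (k + 1)) = 0 := by
        rw [hTkrec, coeff_zero_eq_constantCoeff, map_mul, constantCoeff_X, zero_mul]
      have hone : coeff (R := ℝ) 1 (Tk (k + 1)) = 0 := by
        rw [show (1:ℕ) = 0 + 1 from rfl, hrec, if_pos rfl, Finset.sum_range_one, pow_zero]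
        simp
      have hTsucc : ∀ n : ℕ, coeff (R := ℝ) (n + 1) T
          = ∑ j ∈ Finset.range (n + 1), a j * coeff (R := ℝ) n (T ^ j) := by
        intro n
        conv_lhs => rw [hT]
        rw [PowerSeries.coeff_succ_X_mul, phiSubst, PowerSeries.coeff_mk]
      constructor
      · intro n
        match n with
        | 0 => rw [hzero]
        | 1 => rw [hone]
        | (m + 2) =>
          rw [show m + 2 = (m + 1) + 1 from rfl, hrec, if_neg (by omega), sub_zero]
          exact Finset.sum_nonneg fun j _ => mul_nonneg (ha j)
            (coeff_pow_nonneg (fun l _ => ih0 l) j _ le_rfl)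
      · intro n
        match n with
        | 0 => rw [hzero, coeff_zero_eq_constantCoeff, hTc]
        | 1 => rw [hone, T_coeff_one a T hT]; exact ha 0
        | (m + 2) =>
          rw [show m + 2 = (m + 1) + 1 from rfl, hrec, if_neg (by omega), sub_zero,
            hTsucc (m + 1)]
          refine Finset.sum_le_sum fun j _ => mul_le_mul_of_nonneg_left ?_ (ha j)
          exact coeff_pow_le_pow ih0 hT0 ihle j _

lemma pow_lower (ha : ∀ j, 0 ≤ a j) (hT : T = PowerSeries.X * phiSubst a T) :
    ∀ p n : ℕ, a 0 ^ p * coeff (R := ℝ) n T ≤ coeff (R := ℝ) (n + p) (T ^ (p + 1)) := by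
  have hT0 : ∀ i, 0 ≤ coeff (R := ℝ) i T := T_coeff_nonneg a ha T hT
  have hc1 : coeff (R := ℝ) 1 T = a 0 := T_coeff_one a T hT
  intro p
  induction p with
  | zero => intro n; simp
  | succ p ih =>
      intro n
      have hmem : ((n + p, 1) : ℕ × ℕ) ∈ Finset.HasAntidiagonal.antidiagonal (n + (p + 1)) := by
        rw [Finset.HasAntidiagonal.mem_antidiagonal]; omega
      have hsingle := Finset.single_le_sum
        (f := fun q : ℕ × ℕ => coeff (R := ℝ) q.1 (T ^ (p + 1)) * coeff (R := ℝ) q.2 T)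
        (fun q _ => mul_nonneg (coeff_pow_nonneg (fun l _ => hT0 l) (p + 1) q.1 le_rfl)
          (hT0 q.2)) hmem
      calc a 0 ^ (p + 1) * coeff (R := ℝ) n T = (a 0 ^ p * coeff (R := ℝ) n T) * a 0 := by ring
        _ ≤ coeff (R := ℝ) (n + p) (T ^ (p + 1)) * a 0 :=
            mul_le_mul_of_nonneg_right (ih n) (ha 0)
        _ = coeff (R := ℝ) (n + p, 1).1 (T ^ (p + 1)) * coeff (R := ℝ) (n + p, 1).2 T := by rw [hc1]
        _ ≤ ∑ q ∈ Finset.HasAntidiagonal.antidiagonal (n + (p + 1)),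
              coeff (R := ℝ) q.1 (T ^ (p + 1)) * coeff (R := ℝ) q.2 T := hsingle
        _ = coeff (R := ℝ) (n + (p + 1)) (T ^ (p + 1 + 1)) := by
            conv_rhs => rw [pow_succ, PowerSeries.coeff_mul]

lemma Tk_lower (ha : ∀ j, 0 ≤ a j) (ha0 : 0 < a 0)
    (ha2 : ∃ j, 2 ≤ j ∧ 0 < a j)
    (hTc : PowerSeries.constantCoeff (R := ℝ) T = 0)
    (hT : T = PowerSeries.X * phiSubst a T) (hTk0 : Tk 0 = T)
    (hTkrec : ∀ k : ℕ, Tk (k + 1) =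
      PowerSeries.X * (phiSubst a (Tk k) - PowerSeries.C (R := ℝ) (a 0))) :
    ∀ k, ∃ e : ℕ, ∃ d : ℝ, 0 < d ∧ ∀ n, d * coeff (R := ℝ) n T ≤ coeff (R := ℝ) (n + e) (Tk k) := by
  obtain ⟨J, hJ2, hJpos⟩ := ha2
  have hT0 : ∀ i, 0 ≤ coeff (R := ℝ) i T := T_coeff_nonneg a ha T hT
  intro k
  induction k with
  | zero => exact ⟨0, 1, one_pos, fun n => by simp [hTk0]⟩
  | succ k ih =>
      obtain ⟨e, d, hd, hlow⟩ := ih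
      obtain ⟨hS0, -⟩ := Tk_bounds a T Tk ha hTc hT hTk0 hTkrec k
      refine ⟨e * J + J, a J * d ^ J * a 0 ^ (J - 1), by positivity, fun n => ?_⟩
      match n with
      | 0 =>
        rw [coeff_zero_eq_constantCoeff, hTc, mul_zero]
        exact (Tk_bounds a T Tk ha hTc hT hTk0 hTkrec (k + 1)).1 _
      | (n + 1) =>
        set m : ℕ := n + e * J + J with hmdef
        have hidx : n + 1 + (e * J + J) = m + 1 := by omega
        rw [hidx]
        have hrec : coeff (R := ℝ) (m + 1) (Tk (k + 1))
            = (∑ j ∈ Finset.range (m + 1), a j * coeff (R := ℝ) m ((Tk k) ^ j))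
              - (if m = 0 then a 0 else 0) := by
          rw [hTkrec, PowerSeries.coeff_succ_X_mul, map_sub, PowerSeries.coeff_C, phiSubst,
            PowerSeries.coeff_mk]
        rw [hrec, if_neg (by omega), sub_zero]
        -- single term j = J
        have hJmem : J ∈ Finset.range (m + 1) := Finset.mem_range.2 (by omega)
        have hsingle := Finset.single_le_sum
          (f := fun j => a j * coeff (R := ℝ) m ((Tk k) ^ j))
          (fun j _ => mul_nonneg (ha j) (coeff_pow_nonneg (fun l _ => hS0 l) j m le_rfl)) hJmem
        refine le_trans ?_ hsingle
        -- A := X^e * (C d * T) ≤ Tk k coefficientwise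
        set A : PowerSeries ℝ := PowerSeries.X ^ e * (PowerSeries.C (R := ℝ) d * T) with hAdef
        have hAcoeff : ∀ i, coeff (R := ℝ) i A
            = if e ≤ i then d * coeff (R := ℝ) (i - e) T else 0 := by
          intro i
          rw [hAdef, PowerSeries.coeff_X_pow_mul', PowerSeries.coeff_C_mul]
        have hA0 : ∀ i, 0 ≤ coeff (R := ℝ) i A := by
          intro i; rw [hAcoeff]
          split_ifs
          · exact mul_nonneg hd.le (hT0 _)
          · exact le_rfl
        have hAle : ∀ i, coeff (R := ℝ) i A ≤ coeff (R := ℝ) i (Tk k) := by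
          intro i; rw [hAcoeff]
          split_ifs with hi
          · have := hlow (i - e)
            rwa [show i - e + e = i by omega] at this
          · exact hS0 i
        have hpowle : coeff (R := ℝ) m (A ^ J) ≤ coeff (R := ℝ) m ((Tk k) ^ J) :=
          coeff_pow_le_pow hA0 hS0 hAle J m
        have hAJ : A ^ J = PowerSeries.X ^ (e * J)
            * (PowerSeries.C (R := ℝ) (d ^ J) * T ^ J) := by
          rw [hAdef, mul_pow, ← pow_mul, mul_pow, ← map_pow]
        have hAJcoeff : coeff (R := ℝ) m (A ^ J) = d ^ J * coeff (R := ℝ) (n + J) (T ^ J) := by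
          rw [hAJ, show m = (n + J) + e * J by omega, PowerSeries.coeff_X_pow_mul,
            PowerSeries.coeff_C_mul]
        have hTJ : a 0 ^ (J - 1) * coeff (R := ℝ) (n + 1) T ≤ coeff (R := ℝ) (n + J) (T ^ J) := by
          have := pow_lower a T ha hT (J - 1) (n + 1)
          rwa [show n + 1 + (J - 1) = n + J by omega, show J - 1 + 1 = J by omega] at this
        calc a J * d ^ J * a 0 ^ (J - 1) * coeff (R := ℝ) (n + 1) T
            = a J * (d ^ J * (a 0 ^ (J - 1) * coeff (R := ℝ) (n + 1) T)) := by ring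
          _ ≤ a J * (d ^ J * coeff (R := ℝ) (n + J) (T ^ J)) := by
              refine mul_le_mul_of_nonneg_left (mul_le_mul_of_nonneg_left hTJ ?_) (ha J)
              positivity
          _ = a J * coeff (R := ℝ) m (A ^ J) := by rw [hAJcoeff]
          _ ≤ a J * coeff (R := ℝ) m ((Tk k) ^ J) := mul_le_mul_of_nonneg_left hpowle (ha J)

end TkSec

/-- for every `k ≥ 0`, the formal power series `T_k` has the same radius of
convergence as `T`, namely `ρ = τ/φ(τ)` (radius expressed via summability of `∑ [z^n]T_k·x^n`). -/
theorem stmt_3 (a : ℕ → ℝ) (ha : ∀ j, 0 ≤ a j) (ha0 : 0 < a 0)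
    (ha2 : ∃ j, 2 ≤ j ∧ 0 < a j) (R : ℝ) (hR : 0 < R)
    (hconv : ∀ s : ℝ, |s| < R → Summable fun j : ℕ => a j * s ^ j)
    (hdiv : ∀ s : ℝ, R < |s| → ¬ Summable fun j : ℕ => a j * s ^ j)
    (τ : ℝ) (hτ : τ ∈ Set.Ioo 0 R)
    (hcrit : τ * phiDeriv a τ = phiFun a τ)
    (huniq : ∀ s ∈ Set.Ioo 0 R, s * phiDeriv a s = phiFun a s → s = τ)
    (hnonper : ∃ i j k : ℕ, i < j ∧ j < k ∧ 0 < a i ∧ 0 < a j ∧ 0 < a k ∧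
      Nat.gcd (j - i) (k - i) = 1)
    (ρ : ℝ) (hρ : ρ = τ / phiFun a τ)
    (T : PowerSeries ℝ) (hTc : PowerSeries.constantCoeff (R := ℝ) T = 0)
    (hT : T = PowerSeries.X * phiSubst a T)
    (Tk : ℕ → PowerSeries ℝ) (hTk0 : Tk 0 = T)
    (hTkrec : ∀ k : ℕ, Tk (k + 1) =
      PowerSeries.X * (phiSubst a (Tk k) - PowerSeries.C (R := ℝ) (a 0))) :
    ∀ k : ℕ, ∀ x : ℝ,
      (|x| < ρ → Summable fun n : ℕ => (PowerSeries.coeff (R := ℝ) n) (Tk k) * x ^ n) ∧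
      (ρ < |x| → ¬ Summable fun n : ℕ => (PowerSeries.coeff (R := ℝ) n) (Tk k) * x ^ n) := by
  obtain ⟨hτ0, hτR⟩ := hτ
  have hT0 : ∀ i, 0 ≤ coeff (R := ℝ) i T := T_coeff_nonneg a ha T hT
  have hsumτ : Summable fun j : ℕ => a j * τ ^ j :=
    hconv τ (by rw [abs_of_pos hτ0]; exact hτR)
  have hφτ : 0 < phiFun a τ := lt_of_lt_of_le ha0 (phi_ge_a0 a ha hτ0.le hsumτ)
  have hρ0 : 0 < ρ := by rw [hρ]; positivity
  have hρτ : ρ * phiFun a τ = τ := by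
    rw [hρ]; field_simp
  intro k x
  obtain ⟨hk0, hkle⟩ := Tk_bounds a T Tk ha hTc hT hTk0 hTkrec k
  constructor
  · intro hx
    have hx0 : (0:ℝ) ≤ |x| := abs_nonneg x
    have hsumT : Summable fun n : ℕ => coeff (R := ℝ) n T * |x| ^ n :=
      conv_summable a T ha hTc hT hτ0 hτR hconv hρ0.le hρτ hx0 hx.le
    refine Summable.of_norm_bounded hsumT (fun n => ?_)
    rw [Real.norm_eq_abs, abs_mul, abs_pow, abs_of_nonneg (hk0 n)]
    exact mul_le_mul_of_nonneg_right (hkle n) (pow_nonneg hx0 n)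
  · intro hx hsum
    obtain ⟨e, d, hd, hlow⟩ := Tk_lower a T Tk ha ha0 ha2 hTc hT hTk0 hTkrec k
    set y : ℝ := |x| with hydef
    have hy0 : 0 < y := lt_trans hρ0 hx
    have habs : Summable fun n : ℕ => coeff (R := ℝ) n (Tk k) * y ^ n := by
      refine (hsum.abs).congr fun n => ?_
      rw [abs_mul, abs_pow, abs_of_nonneg (hk0 n)]
    have hshift : Summable fun n : ℕ => coeff (R := ℝ) (n + e) (Tk k) * y ^ (n + e) :=
      (summable_nat_add_iff e).2 habs
    have hTsum : Summable fun n : ℕ => coeff (R := ℝ) n T * y ^ n := by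
      refine Summable.of_nonneg_of_le
        (fun n => mul_nonneg (hT0 n) (pow_nonneg hy0.le n)) (fun n => ?_)
        (hshift.mul_left ((d * y ^ e)⁻¹))
      rw [inv_mul_eq_div, le_div_iff₀ (by positivity)]
      calc coeff (R := ℝ) n T * y ^ n * (d * y ^ e) = d * coeff (R := ℝ) n T * (y ^ n * y ^ e) := by ring
        _ = d * coeff (R := ℝ) n T * y ^ (n + e) := by rw [pow_add]
        _ ≤ coeff (R := ℝ) (n + e) (Tk k) * y ^ (n + e) :=
            mul_le_mul_of_nonneg_right (hlow n) (pow_nonneg hy0.le _)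
    have hle := div_bound a T ha hTc hT hτ0 hτR hconv hcrit ha0 hρτ hy0 hTsum
    linarith
end

section
/- Let (t_i)_{i≥1} be the real sequence defined by t_1 = 1/4 and t_i = 1/(4 − 4·t_{i−1}) − 1/4 for i ≥ 2. Then t_i = 3/(2·(4^i + 2)) for every i ≥ 1. -/
/-! The map `x ↦ 1/(4 - 4x) - 1/4` sends `3/(2(a + 2))` to `3/(2(4a + 2))`, so along the recursion
the parameter `a` is multiplied by `4`, starting from `a = 4` at `t_1 = 1/4`. -/

lemma one_div_four_sub_four_mul_sub_one_div_four (a : ℝ) (h₁ : a + 2 ≠ 0) (h₂ : 4 * a + 2 ≠ 0) :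
    1 / (4 - 4 * (3 / (2 * (a + 2)))) - 1 / 4 = 3 / (2 * (4 * a + 2)) := by
  have h : 4 - 4 * (3 / (2 * (a + 2))) = (4 * a + 2) / (a + 2) := by
    field_simp
    ring
  rw [h, one_div_div, div_sub_div _ _ h₂ four_ne_zero, div_eq_div_iff (mul_ne_zero h₂ four_ne_zero)
    (mul_ne_zero two_ne_zero h₂)]
  ring

/-- if `t_1 = 1/4` and `t_i = 1/(4 − 4·t_{i−1}) − 1/4` for `i ≥ 2`, then
`t_i = 3/(2·(4^i + 2))` for every `i ≥ 1`. -/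
theorem stmt_9 (t : ℕ → ℝ) (ht1 : t 1 = 1 / 4)
    (htrec : ∀ i : ℕ, 2 ≤ i → t i = 1 / (4 - 4 * t (i - 1)) - 1 / 4) :
    ∀ i : ℕ, 1 ≤ i → t i = 3 / (2 * (4 ^ i + 2)) := by
  intro i hi
  induction i, hi using Nat.le_induction with
  | base => rw [ht1]; norm_num
  | succ n _ ih =>
    rw [htrec (n + 1) (by omega), Nat.add_sub_cancel, ih, pow_succ',
      one_div_four_sub_four_mul_sub_one_div_four] <;> positivity
end

section
/- Let (t_i)_{i≥1} be defined by t_1 = 2/3 and t_i = (t_{i−1}² + t_{i−1})/3 for i ≥ 2, and let (A_i)_{i≥1} be the integer sequence defined by A_1 = 2 and A_i = A_{i−1}² + 3^{2^{i−1}−1}·A_{i−1} for i ≥ 2. Then t_i = A_i · 3^{1−2^i} for every i ≥ 1. -/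
lemma stmt_12_key (x : ℝ) (e : ℤ) :
    ((x^2*((3:ℝ)^(1-e))^2 + x*(3:ℝ)^(1-e))/3) = (x^2 + (3:ℝ)^(e-1)*x) * (3:ℝ)^(1-2*e) := by
  have h3 : (3:ℝ) ≠ 0 := by norm_num
  rw [zpow_sub₀ h3, zpow_sub₀ h3, zpow_sub₀ h3, show (2*e) = e*2 from mul_comm 2 e, zpow_mul,
    zpow_one, zpow_two]
  set y := (3:ℝ)^e with hydef
  have hy : y ≠ 0 := zpow_ne_zero e h3
  field_simp

/-- for the Motzkin recursion `t_1 = 2/3`, `t_i = (t_{i−1}² + t_{i−1})/3`, and the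
integer recursion `A_1 = 2`, `A_i = A_{i−1}² + 3^{2^{i−1}−1}·A_{i−1}`, one has
`t_i = A_i·3^{1−2^i}` for every `i ≥ 1`. -/
theorem stmt_12 (t : ℕ → ℝ) (A : ℕ → ℤ)
    (ht1 : t 1 = 2 / 3)
    (htrec : ∀ i : ℕ, 2 ≤ i → t i = (t (i - 1) ^ 2 + t (i - 1)) / 3)
    (hA1 : A 1 = 2)
    (hArec : ∀ i : ℕ, 2 ≤ i → A i = A (i - 1) ^ 2 + 3 ^ (2 ^ (i - 1) - 1) * A (i - 1)) :
    ∀ i : ℕ, 1 ≤ i → t i = (A i : ℝ) * (3 : ℝ) ^ ((1 : ℤ) - 2 ^ i) := by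
  refine Nat.le_induction ?_ ?_
  · rw [ht1, hA1]
    norm_num
  · intro n hn ih
    have h2 : 2 ≤ n + 1 := by omega
    rw [htrec (n+1) h2, hArec (n+1) h2]
    simp only [Nat.add_sub_cancel]
    rw [ih]
    have h1 : (1:ℕ) ≤ 2^n := Nat.one_le_two_pow
    have hcast : ((3:ℤ) ^ (2 ^ n - 1) * A n : ℤ) = ((3:ℤ) ^ (2^n - 1)) * A n := rfl
    push_cast
    have hexp : ((3:ℝ) ^ (2 ^ n - 1 : ℕ)) = (3:ℝ) ^ ((2:ℤ)^n - 1) := by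
      rw [← zpow_natCast]
      congr 1
      push_cast [h1]
      ring
    rw [hexp, show ((1:ℤ) - 2 ^ (n+1)) = 1 - 2 * 2^n by ring]
    rw [mul_pow]
    exact stmt_12_key _ _
end

section
/- For every fixed k ≥ 1, lim_{n→∞} [z^n]B_k(z) / [z^n]B_0(z) = 2^{k+1−2^k}; that is, the probability that a random complete binary tree with n internal vertices has protection number at least k converges to 2^{k+1−2^k}. -/
open Filter PowerSeries Finset

/-- The coefficient formula: `G t n = [z^n] B₀^{t+1}`. -/
noncomputable def Gfun (t n : ℕ) : ℝ :=
  ((t : ℝ) + 1) * (2 * n + t).factorial / (n.factorial * (n + t + 1).factorial)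

lemma factorial_pos_real (n : ℕ) : (0 : ℝ) < n.factorial := by
  exact_mod_cast n.factorial_pos

lemma catalan_real (n : ℕ) :
    (catalan n : ℝ) = (2 * n).factorial / (n.factorial * (n + 1).factorial) := by
  have h : n.centralBinom * (n.factorial * n.factorial) = (2 * n).factorial := by
    have := Nat.choose_mul_factorial_mul_factorial (show n ≤ 2 * n by omega)
    rw [Nat.centralBinom]
    rw [show 2 * n - n = n by omega] at this
    rw [← this]; ring
  have h2 : (n + 1) * catalan n = n.centralBinom := succ_mul_catalan_eq_centralBinom n
  have key : ((n + 1) * catalan n * (n.factorial * n.factorial) : ℕ) = (2 * n).factorial := by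
    rw [h2, h]
  have hfact : ((n + 1).factorial : ℝ) = (n + 1) * n.factorial := by
    rw [Nat.factorial_succ]; push_cast; ring
  have hne : (n.factorial : ℝ) ≠ 0 := (factorial_pos_real n).ne'
  have hne2 : ((n : ℝ) + 1) ≠ 0 := by positivity
  have keyR : ((2 * n).factorial : ℝ) = ((n:ℝ) + 1) * (catalan n : ℝ) * ((n.factorial : ℝ) * (n.factorial : ℝ)) := by
    exact_mod_cast key.symm
  rw [hfact, keyR]
  field_simp
  
lemma G_zero (n : ℕ) : Gfun 0 n = (catalan n : ℝ) := by
  rw [catalan_real, Gfun]; norm_num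

/-- the key contiguous identity -/
lemma G_ident (u n : ℕ) : Gfun (u + 2) n = Gfun (u + 1) (n + 1) - Gfun u (n + 1) := by
  unfold Gfun
  rw [show 2 * (n + 1) + (u + 1) = (2 * n + (u + 2)) + 1 by ring,
      show 2 * (n + 1) + u = 2 * n + (u + 2) by ring,
      show (n + 1) + (u + 1) + 1 = (n + (u + 2)) + 1 by ring,
      show (n + 1) + u + 1 = n + (u + 2) by ring]
  rw [Nat.factorial_succ (2 * n + (u + 2)), Nat.factorial_succ (n + (u + 2)),
      Nat.factorial_succ n]
  have h1 : (n.factorial : ℝ) ≠ 0 := (factorial_pos_real n).ne'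
  have h2 : ((n + (u + 2)).factorial : ℝ) ≠ 0 := (factorial_pos_real _).ne'
  have h3 : ((n : ℝ) + 1) ≠ 0 := by positivity
  have h4 : ((n : ℝ) + ((u : ℝ) + 2) + 1) ≠ 0 := by positivity
  push_cast
  field_simp
  ring

/-- factorial expansion as a product -/
lemma fact_expand : ∀ (m n : ℕ), m ≤ n →
    (n.factorial : ℝ) = ((n - m).factorial : ℝ) * ∏ i ∈ range m, ((n : ℝ) - i) := by
  intro m
  induction m with
  | zero => intro n _; simp
  | succ m ih =>
    intro n hm
    have h1 : m ≤ n := by omega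
    rw [ih n h1, prod_range_succ]
    have h2 : n - m = (n - (m + 1)) + 1 := by omega
    have h3 : ((n - m).factorial : ℝ) = ((n : ℝ) - m) * ((n - (m + 1)).factorial : ℝ) := by
      rw [h2, Nat.factorial_succ]
      push_cast [show n - (m + 1) + 1 = n - m from h2.symm]
      rw [Nat.cast_sub h1]
    rw [h3]
    ring

section Main

variable (B : ℕ → PowerSeries ℝ)
    (hB0c : PowerSeries.constantCoeff (B 0) = 1)
    (hB0 : B 0 = 1 + PowerSeries.X * (B 0) ^ 2)
    (hBrec : ∀ k : ℕ, B (k + 1) = PowerSeries.X * (B k) ^ 2)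

include hB0c hB0 in
lemma coeff_B0 : ∀ n : ℕ, PowerSeries.coeff n (B 0) = (catalan n : ℝ) := by
  intro n
  induction n using Nat.strong_induction_on with
  | _ n ih =>
    match n with
    | 0 => simpa using hB0c
    | Nat.succ n =>
      have : PowerSeries.coeff (n + 1) (B 0)
          = PowerSeries.coeff n ((B 0) * (B 0)) := by
        conv_lhs => rw [hB0]
        rw [map_add, PowerSeries.coeff_one, sq, coeff_succ_X_mul]
        simp
      rw [this, PowerSeries.coeff_mul]
      rw [catalan_succ']
      push_cast
      refine Finset.sum_congr rfl fun p hp => ?_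
      rw [Finset.HasAntidiagonal.mem_antidiagonal] at hp
      rw [ih p.1 (by omega), ih p.2 (by omega)]

include hB0 in
lemma pow_rec (s : ℕ) : (B 0) ^ (s + 1) = (B 0) ^ s + PowerSeries.X * (B 0) ^ (s + 2) := by
  calc (B 0) ^ (s + 1) = (B 0) ^ s * (B 0) := by ring
  _ = (B 0) ^ s * (1 + PowerSeries.X * (B 0) ^ 2) := by rw [← hB0]
  _ = (B 0) ^ s + PowerSeries.X * (B 0) ^ (s + 2) := by ring

include hB0c hB0 in
lemma coeff_pow : ∀ s n : ℕ, PowerSeries.coeff n ((B 0) ^ (s + 1)) = Gfun s n := by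
  intro s
  induction s using Nat.twoStepInduction with
  | zero =>
    intro n
    rw [pow_one, coeff_B0 B hB0c hB0, G_zero]
  | one =>
    intro n
    have h := congrArg (PowerSeries.coeff (n + 1)) (pow_rec B hB0 0)
    rw [pow_one, pow_zero, map_add, PowerSeries.coeff_one, coeff_succ_X_mul] at h
    simp only [Nat.succ_ne_zero, if_false, zero_add] at h
    rw [show (1:ℕ) + 1 = 2 from rfl, ← h, coeff_B0 B hB0c hB0]
    -- need : catalan (n+1) = Gfun 1 n,  i.e. Gfun 0 (n+1) = Gfun 1 n
    rw [← G_zero]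
    unfold Gfun
    have e1 : 2 * (n + 1) + 0 = (2 * n + 1) + 1 := by ring
    rw [e1]
    have f1 : (((2 * n + 1) + 1).factorial : ℝ) = ((2 * n + 1) + 1) * (2 * n + 1).factorial := by
      rw [Nat.factorial_succ]; push_cast; ring
    have f4 : ((n + 1).factorial : ℝ) = (n + 1) * n.factorial := by
      rw [Nat.factorial_succ]; push_cast; ring
    rw [f1, f4, show n + 1 + 0 + 1 = n + 1 + 1 from rfl, show n + 1 + 1 = n + 2 by ring]
    have h1 : (n.factorial : ℝ) ≠ 0 := (factorial_pos_real n).ne'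
    have h5 : ((n + 2).factorial : ℝ) ≠ 0 := (factorial_pos_real _).ne'
    have h3 : ((n : ℝ) + 1) ≠ 0 := by positivity
    field_simp
    push_cast
    ring
  | more s ih1 ih2 =>
    intro n
    have h := congrArg (PowerSeries.coeff (n + 1)) (pow_rec B hB0 (s + 1))
    rw [map_add, coeff_succ_X_mul, ih2 (n + 1), ih1 (n + 1)] at h
    have : PowerSeries.coeff n ((B 0) ^ (s + 3)) = Gfun (s + 1) (n + 1) - Gfun s (n + 1) := by
      have := h
      linarith [h]
    rw [show s + 2 + 1 = s + 3 from rfl, this, G_ident]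

include hBrec in
lemma B_eq (k : ℕ) : B k = PowerSeries.X ^ (2 ^ k - 1) * (B 0) ^ (2 ^ k) := by
  induction k with
  | zero => simp
  | succ k ih =>
    have h1 : (1:ℕ) ≤ 2 ^ k := Nat.one_le_two_pow
    rw [hBrec k, ih]
    have e : 2 ^ (k + 1) - 1 = (2 ^ k - 1) * 2 + 1 := by omega
    have e2 : 2 ^ (k + 1) = 2 ^ k * 2 := by rw [pow_succ]
    rw [e, e2, pow_add, pow_mul, pow_mul, pow_one, mul_pow]
    ring

end Main

lemma tendsto_ratio (c : ℝ) :
    Tendsto (fun n : ℕ => ((n : ℝ) - c) / (2 * n - c)) atTop (nhds (1 / 2)) := by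
  have h0 : Tendsto (fun n : ℕ => c / n) atTop (nhds 0) :=
    Tendsto.div_atTop tendsto_const_nhds tendsto_natCast_atTop_atTop
  have h1 : Tendsto (fun n : ℕ => (1 - c / n) / (2 - c / n)) atTop (nhds (1 / 2)) := by
    have hnum : Tendsto (fun n : ℕ => 1 - c / n) atTop (nhds 1) := by
      simpa using tendsto_const_nhds.sub h0
    have hden : Tendsto (fun n : ℕ => 2 - c / n) atTop (nhds 2) := by
      simpa using tendsto_const_nhds.sub h0
    exact hnum.div hden (two_ne_zero)
  refine h1.congr' ?_
  filter_upwards [eventually_atTop.2 ⟨⌈c⌉.toNat + 1, fun n hn => hn⟩] with n hn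
  have hc : c < n := by
    have : (⌈c⌉.toNat : ℝ) < n := by exact_mod_cast Nat.lt_of_succ_le hn
    calc c ≤ ⌈c⌉ := Int.le_ceil c
    _ ≤ (⌈c⌉.toNat : ℝ) := by exact_mod_cast Int.self_le_toNat _
    _ < n := this
  have hn1 : 1 ≤ n := le_trans (by omega) hn
  have hn0 : (n : ℝ) ≠ 0 := by
    have : (0:ℝ) < n := by exact_mod_cast hn1
    linarith
  have hnp : (0:ℝ) < n := by exact_mod_cast hn1
  have hd : 2 * (n : ℝ) - c ≠ 0 := by
    have : (0:ℝ) < 2 * (n:ℝ) - c := by linarith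
    exact this.ne'
  have e1 : 1 - c / (n:ℝ) = ((n:ℝ) - c) / n := by
    field_simp
  have e2 : 2 - c / (n:ℝ) = (2 * (n:ℝ) - c) / n := by
    field_simp
  rw [e1, e2, div_div_div_cancel_right₀]
  exact hn0

/-- for complete binary trees (`B_0 = 1 + z·B_0²`, `B_k = z·B_{k−1}²`), for every
fixed `k ≥ 1`, `[z^n]B_k/[z^n]B_0 → 2^{k+1−2^k}` as `n → ∞`. -/
theorem stmt_14 (B : ℕ → PowerSeries ℝ)
    (hB0c : PowerSeries.constantCoeff (B 0) = 1)
    (hB0 : B 0 = 1 + PowerSeries.X * (B 0) ^ 2)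
    (hBrec : ∀ k : ℕ, B (k + 1) = PowerSeries.X * (B k) ^ 2) :
    ∀ k : ℕ, 1 ≤ k →
      Tendsto (fun n : ℕ => (PowerSeries.coeff n) (B k) / (PowerSeries.coeff n) (B 0))
        atTop (nhds ((2 : ℝ) ^ ((k : ℤ) + 1 - 2 ^ k))) := by
  intro k hk
  set r : ℕ := 2 ^ k with hr
  set s : ℕ := r - 1 with hs
  have hr1 : 1 ≤ r := Nat.one_le_two_pow
  -- the limit function
  have hlim : Tendsto (fun n : ℕ => (r : ℝ) * ∏ i ∈ range s, ((n : ℝ) - i) / (2 * n - i))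
      atTop (nhds ((r : ℝ) * (1 / 2) ^ s)) := by
    have : Tendsto (fun n : ℕ => ∏ i ∈ range s, ((n : ℝ) - i) / (2 * n - i))
        atTop (nhds (∏ _i ∈ range s, (1 / 2 : ℝ))) := by
      exact tendsto_finset_prod _ (fun i _ => tendsto_ratio (i : ℝ))
    simpa using tendsto_const_nhds.mul this
  have hval : (r : ℝ) * (1 / 2) ^ s = (2 : ℝ) ^ ((k : ℤ) + 1 - 2 ^ k) := by
    have h1 : ((r : ℝ)) = (2 : ℝ) ^ (k : ℤ) := by
      rw [hr]; push_cast; rw [zpow_natCast]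
    have h2 : ((1 / 2 : ℝ)) ^ s = (2 : ℝ) ^ (-(s : ℤ)) := by
      rw [zpow_neg, zpow_natCast, one_div, inv_pow]
    rw [h1, h2, ← zpow_add₀ (by norm_num : (2:ℝ) ≠ 0)]
    congr 1
    have : ((s : ℤ)) = (2 : ℤ) ^ k - 1 := by
      rw [hs, hr]
      push_cast [Nat.cast_sub Nat.one_le_two_pow]
      norm_num
    rw [this]; ring
  rw [← hval]
  refine hlim.congr' ?_
  filter_upwards [eventually_atTop.2 ⟨r + 1, fun n hn => hn⟩] with n hn
  -- now show equality for n ≥ r + 1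
  have hsn : s ≤ n := by omega
  have hs2n : s ≤ 2 * n := by omega
  have hBk : PowerSeries.coeff n (B k) = Gfun s (n - s) := by
    rw [B_eq B hBrec k, ← hr]
    have hdec : n = (n - s) + s := by omega
    have hre : r = s + 1 := by omega
    calc PowerSeries.coeff n (PowerSeries.X ^ s * (B 0) ^ r)
        = PowerSeries.coeff ((n - s) + s) (PowerSeries.X ^ s * (B 0) ^ (s + 1)) := by
          rw [← hdec, ← hre]
      _ = PowerSeries.coeff (n - s) ((B 0) ^ (s + 1)) := PowerSeries.coeff_X_pow_mul _ _ _
      _ = Gfun s (n - s) := coeff_pow B hB0c hB0 s (n - s)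
  have hB0n : PowerSeries.coeff n (B 0) = Gfun 0 n := by
    rw [← pow_one (B 0)]
    exact coeff_pow B hB0c hB0 0 n
  rw [hBk, hB0n]
  unfold Gfun
  simp only [Nat.add_zero, Nat.cast_zero, zero_add, Nat.mul_zero]
  have e1 : 2 * (n - s) + s = 2 * n - s := by omega
  have e2 : (n - s) + s + 1 = n + 1 := by omega
  rw [e1, e2]
  -- expand factorials
  have hfn : (n.factorial : ℝ) = ((n - s).factorial : ℝ) * ∏ i ∈ range s, ((n : ℝ) - i) :=
    fact_expand s n hsn
  have hf2n : ((2 * n).factorial : ℝ)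
      = ((2 * n - s).factorial : ℝ) * ∏ i ∈ range s, (2 * (n : ℝ) - i) := by
    have h := fact_expand s (2 * n) hs2n
    push_cast at h ⊢
    exact h
  have hP : (0 : ℝ) < ∏ i ∈ range s, ((n : ℝ) - i) := by
    apply Finset.prod_pos
    intro i hi
    rw [Finset.mem_range] at hi
    have : (i : ℝ) < n := by exact_mod_cast (by omega : i < n)
    linarith
  have hQ : (0 : ℝ) < ∏ i ∈ range s, ((2 * n : ℝ) - i) := by
    apply Finset.prod_pos
    intro i hi
    rw [Finset.mem_range] at hi
    have : (i : ℝ) < 2 * n := by exact_mod_cast (by omega : i < 2 * n)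
    linarith
  have hprod : ∏ i ∈ range s, ((n : ℝ) - i) / (2 * n - i)
      = (∏ i ∈ range s, ((n : ℝ) - i)) / (∏ i ∈ range s, ((2 * n : ℝ) - i)) := by
    rw [Finset.prod_div_distrib]
  rw [hprod]
  have n1 : ((n - s).factorial : ℝ) ≠ 0 := (factorial_pos_real _).ne'
  have n2 : ((n + 1).factorial : ℝ) ≠ 0 := (factorial_pos_real _).ne'
  have n3 : ((2 * n - s).factorial : ℝ) ≠ 0 := (factorial_pos_real _).ne'
  have n4 : (n.factorial : ℝ) ≠ 0 := (factorial_pos_real _).ne'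
  have n5 : ((2 * n).factorial : ℝ) ≠ 0 := (factorial_pos_real _).ne'
  have hre : ((s : ℝ) + 1) = (r : ℝ) := by
    have : s + 1 = r := by omega
    exact_mod_cast congrArg (Nat.cast : ℕ → ℝ) this
  have hPne : (∏ i ∈ range s, ((n : ℝ) - i)) ≠ 0 := hP.ne'
  have hQne : (∏ i ∈ range s, ((2 * n : ℝ) - i)) ≠ 0 := hQ.ne'
  rw [hfn, hf2n]
  rw [← hre]
  field_simp
end

section
/- Let A, B ∈ ℝ[[z]] with A having zero constant term, and for f ∈ ℝ[[z]] with zero constant term define Ψ(f) = (1 − A)^{−1} · (A·∑_{i≥2} f(z^i) + B), where f(z^i) denotes substitution of z^i for z and the sum converges in the formal topology. If f, g ∈ ℝ[[z]] have zero constant term and [z^n]f = [z^n]g for all 0 ≤ n ≤ ℓ, then [z^n]Ψ(f) = [z^n]Ψ(g) for all 0 ≤ n ≤ 2ℓ + 2. -/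
open Finset PowerSeries

/-- The formal power series `∑_{i≥2} f(z^i)`, for `f` with zero constant term:
`[z^n] ∑_{i≥2} f(z^i) = ∑_{2 ≤ i ≤ n, i ∣ n} [z^{n/i}]f`. -/
noncomputable def sumExpand (f : PowerSeries ℝ) : PowerSeries ℝ :=
  PowerSeries.mk fun n =>
    ∑ i ∈ Finset.Icc 2 n, if i ∣ n then (PowerSeries.coeff (n / i)) f else 0

lemma mul_coeff_congr (C X Y : PowerSeries ℝ) (N : ℕ)
    (h : ∀ m : ℕ, m ≤ N → (PowerSeries.coeff m) X = (PowerSeries.coeff m) Y) :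
    ∀ n : ℕ, n ≤ N → (PowerSeries.coeff n) (C * X) = (PowerSeries.coeff n) (C * Y) := by
  intro n hn
  rw [PowerSeries.coeff_mul, PowerSeries.coeff_mul]
  apply Finset.sum_congr rfl
  intro p hp
  rw [Finset.HasAntidiagonal.mem_antidiagonal] at hp
  rw [h p.2 (le_trans (by omega) hn)]

/-- for `Ψ(f) = (1 − A)⁻¹·(A·∑_{i≥2} f(z^i) + B)` with `A` of zero constant term,
if `f, g` have zero constant term and agree in coefficients `0, …, ℓ`, then `Ψ(f)` and `Ψ(g)`
agree in coefficients `0, …, 2ℓ+2`. -/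
theorem stmt_15 (A B : PowerSeries ℝ) (hA : PowerSeries.constantCoeff A = 0)
    (f g : PowerSeries ℝ)
    (hf : PowerSeries.constantCoeff f = 0) (hg : PowerSeries.constantCoeff g = 0)
    (ℓ : ℕ) (hfg : ∀ n : ℕ, n ≤ ℓ → (PowerSeries.coeff n) f = (PowerSeries.coeff n) g) :
    ∀ n : ℕ, n ≤ 2 * ℓ + 2 →
      (PowerSeries.coeff n) ((1 - A)⁻¹ * (A * sumExpand f + B)) =
        (PowerSeries.coeff n) ((1 - A)⁻¹ * (A * sumExpand g + B)) := by
  -- sumExpand agree up to 2ℓ+1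
  have hS : ∀ m : ℕ, m ≤ 2 * ℓ + 1 →
      (PowerSeries.coeff m) (sumExpand f) = (PowerSeries.coeff m) (sumExpand g) := by
    intro m hm
    simp only [sumExpand, PowerSeries.coeff_mk]
    apply Finset.sum_congr rfl
    intro i hi
    rw [Finset.mem_Icc] at hi
    have h2 : m / i ≤ ℓ := by
      calc m / i ≤ m / 2 := Nat.div_le_div_left hi.1 (by norm_num)
        _ ≤ (2 * ℓ + 1) / 2 := Nat.div_le_div_right hm
        _ = ℓ := by omega
    rw [hfg (m / i) h2]
  -- A * sumExpand agree up to 2ℓ+2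
  have hAS : ∀ n : ℕ, n ≤ 2 * ℓ + 2 →
      (PowerSeries.coeff n) (A * sumExpand f) = (PowerSeries.coeff n) (A * sumExpand g) := by
    intro n hn
    rw [PowerSeries.coeff_mul, PowerSeries.coeff_mul]
    apply Finset.sum_congr rfl
    intro p hp
    rw [Finset.HasAntidiagonal.mem_antidiagonal] at hp
    rcases Nat.eq_zero_or_pos p.1 with h0 | h0
    · rw [h0]
      simp [PowerSeries.coeff_zero_eq_constantCoeff, hA]
    · rw [hS p.2 (by omega)]
  -- add B, then multiply
  have hABS : ∀ n : ℕ, n ≤ 2 * ℓ + 2 →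
      (PowerSeries.coeff n) (A * sumExpand f + B) =
        (PowerSeries.coeff n) (A * sumExpand g + B) := by
    intro n hn
    rw [map_add, map_add, hAS n hn]
  exact mul_coeff_congr _ _ _ _ hABS
end
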